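/- arXiv:1210.1741 — 11 statements merged into one kernel-verified Lean document; each statement's English description precedes it below -/
import Mathlib

section
/- If for every nonempty C ∈ 𝒞 and K ∈ 𝒦 with C ≺ K (cover in 𝒦) we have |K \ C| = 1, then for any height function h, a nonempty set S ∈ 𝒞 is a pre-island with respect to (𝒞, 𝒦, h) if and only if it is an island with respect to (𝒞, 𝒦, h). -/
open Finset

variable {U : Type*}

/-- `K` covers `S` in the poset `(𝒦, ⊆)`. -/
def Covers (𝒦 : Finset (Finset U)) (S K : Finset U) : Prop :=
  S ⊂ K ∧ ∀ K' ∈ 𝒦, S ⊂ K' → ¬K' ⊂ K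

/-- `min h(K) < min h(S)` (for nonempty finite `S`, `K`). -/
def MinLt (h : U → ℝ) (K S : Finset U) : Prop :=
  ∃ k ∈ K, ∀ s ∈ S, h k < h s

/-- `S` is a pre-island with respect to `(𝒞, 𝒦, h)`. -/
def IsPreIsland (𝒞 𝒦 : Finset (Finset U)) (h : U → ℝ) (S : Finset U) : Prop :=
  S ∈ 𝒞 ∧ S.Nonempty ∧ ∀ K ∈ 𝒦, Covers 𝒦 S K → MinLt h K S

/-- `S` is an island with respect to `(𝒞, 𝒦, h)`. -/
def IsIsland [DecidableEq U] (𝒞 𝒦 : Finset (Finset U)) (h : U → ℝ) (S : Finset U) : Prop :=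
  S ∈ 𝒞 ∧ S.Nonempty ∧ ∀ K ∈ 𝒦, Covers 𝒦 S K → ∀ u ∈ K \ S, ∀ s ∈ S, h u < h s

/-- `(𝒞, 𝒦)` is an island domain on `U`. -/
def IslandDomain [Fintype U] (𝒞 𝒦 : Finset (Finset U)) : Prop :=
  𝒞 ⊆ 𝒦 ∧ Finset.univ ∈ 𝒞

/-- `ℋ` is admissible with respect to `(𝒞, 𝒦)`. -/
def Admissible [DecidableEq U] [Fintype U] (𝒞 𝒦 ℋ : Finset (Finset U)) : Prop :=
  ℋ ⊆ 𝒞 ∧ (∅ : Finset U) ∉ ℋ ∧ Finset.univ ∈ ℋ ∧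
    ∀ 𝒜 ⊆ ℋ, 𝒜.Nonempty → (∀ A ∈ 𝒜, ∀ B ∈ 𝒜, A ⊆ B → A = B) →
      ∃ H ∈ 𝒜, ∀ K ∈ 𝒦, H ⊂ K → ¬K ⊆ 𝒜.sup id

/-- `𝒮` is the system of pre-islands corresponding to `(𝒞, 𝒦, h)` for some `h`. -/
def IsSystemOfPreIslands (𝒞 𝒦 𝒮 : Finset (Finset U)) : Prop :=
  ∃ h : U → ℝ, ∀ S, S ∈ 𝒮 ↔ IsPreIsland 𝒞 𝒦 h S

/-- `𝒮` is the system of islands corresponding to `(𝒞, 𝒦, h)` for some `h`. -/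
def IsSystemOfIslands [DecidableEq U] (𝒞 𝒦 𝒮 : Finset (Finset U)) : Prop :=
  ∃ h : U → ℝ, ∀ S, S ∈ 𝒮 ↔ IsIsland 𝒞 𝒦 h S

/-- `(𝒞, 𝒦)` is a connective island domain. -/
def Connective [DecidableEq U] (𝒞 𝒦 : Finset (Finset U)) : Prop :=
  ∀ A ∈ 𝒞, ∀ B ∈ 𝒞, (A ∩ B).Nonempty → ¬B ⊆ A → ∃ K ∈ 𝒦, A ⊂ K ∧ K ⊆ A ∪ B

/-- Any two members are comparable or disjoint. -/
def CDIndependent [DecidableEq U] (ℋ : Finset (Finset U)) : Prop :=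
  ∀ A ∈ ℋ, ∀ B ∈ ℋ, A ⊆ B ∨ B ⊆ A ∨ A ∩ B = ∅

def WeaklyIndependent [DecidableEq U] (ℋ : Finset (Finset U)) : Prop :=
  ∀ H ∈ ℋ, ∀ 𝒢 ⊆ ℋ, 𝒢.Nonempty → H ⊆ 𝒢.sup id → ∃ G ∈ 𝒢, H ⊆ G

def CDWIndependent [DecidableEq U] (ℋ : Finset (Finset U)) : Prop :=
  CDIndependent ℋ ∧ WeaklyIndependent ℋ

/-- The proximity relation `δ`: `A δ B` iff some `K ∈ 𝒦` with `A ⪯ K` meets `B`. -/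
def Delta [DecidableEq U] (𝒦 : Finset (Finset U)) (A B : Finset U) : Prop :=
  ∃ K ∈ 𝒦, (K = A ∨ Covers 𝒦 A K) ∧ (K ∩ B).Nonempty

def Distant [DecidableEq U] (𝒦 : Finset (Finset U)) (A B : Finset U) : Prop :=
  ¬Delta 𝒦 A B ∧ ¬Delta 𝒦 B A

/-- Any two incomparable members of `ℋ` are distant. -/
def DistantFamily [DecidableEq U] (𝒦 ℋ : Finset (Finset U)) : Prop :=
  ∀ A ∈ ℋ, ∀ B ∈ ℋ, ¬A ⊆ B → ¬B ⊆ A → Distant 𝒦 A B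

/-- A proximity domain: connective and `δ` symmetric on nonempty members of `𝒞`. -/
def ProximityDomain [DecidableEq U] (𝒞 𝒦 : Finset (Finset U)) : Prop :=
  Connective 𝒞 𝒦 ∧
    ∀ A ∈ 𝒞, ∀ B ∈ 𝒞, A.Nonempty → B.Nonempty → (Delta 𝒦 A B ↔ Delta 𝒦 B A)

/-- if every cover adds exactly one point, pre-islands and islands coincide. -/
theorem preIsland_iff_island [Fintype U] [DecidableEq U] [Nonempty U]
    (𝒞 𝒦 : Finset (Finset U)) (hdom : IslandDomain 𝒞 𝒦)
    (hone : ∀ C ∈ 𝒞, C.Nonempty → ∀ K ∈ 𝒦, Covers 𝒦 C K → (K \ C).card = 1)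
    (h : U → ℝ) (S : Finset U) :
    IsPreIsland 𝒞 𝒦 h S ↔ IsIsland 𝒞 𝒦 h S := by
  constructor
  · rintro ⟨hS, hne, hpre⟩
    refine ⟨hS, hne, fun K hK hcov u hu s hs => ?_⟩
    obtain ⟨k, hk, hlt⟩ := hpre K hK hcov
    have hcard := hone S hS hne K hK hcov
    obtain ⟨v, hv⟩ := Finset.card_eq_one.mp hcard
    have hkS : k ∉ S := fun hkS => lt_irrefl _ (hlt k hkS)
    have hkv : k ∈ K \ S := Finset.mem_sdiff.mpr ⟨hk, hkS⟩
    rw [hv] at hkv hu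
    rw [Finset.mem_singleton] at hkv hu
    rw [hu, ← hkv]
    exact hlt s hs
  · rintro ⟨hS, hne, hisl⟩
    refine ⟨hS, hne, fun K hK hcov => ?_⟩
    have hcard := hone S hS hne K hK hcov
    obtain ⟨v, hv⟩ := Finset.card_eq_one.mp hcard
    have hvmem : v ∈ K \ S := hv ▸ Finset.mem_singleton_self v
    exact ⟨v, (Finset.mem_sdiff.mp hvmem).1, hisl K hK hcov v hvmem⟩
end

section
/- If S is a pre-island with respect to (𝒞, 𝒦, h), then min h(K) < min h(S) holds for every K ∈ 𝒦 with S ⊊ K (not only for covers of S). -/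
open Finset

variable {U : Type*}

/-- a pre-island beats all proper supersets in `𝒦`, not only covers. -/
theorem preIsland_minLt_of_ssubset [Fintype U] [DecidableEq U] [Nonempty U]
    (𝒞 𝒦 : Finset (Finset U)) (hdom : IslandDomain 𝒞 𝒦) (h : U → ℝ) (S : Finset U)
    (hS : IsPreIsland 𝒞 𝒦 h S) :
    ∀ K ∈ 𝒦, S ⊂ K → MinLt h K S := by
  obtain ⟨hSC, hSne, hcov⟩ := hS
  intro K
  induction K using Finset.strongInduction with
  | _ K ih =>
    intro hK hSK
    by_cases hc : Covers 𝒦 S K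
    · exact hcov K hK hc
    · rw [Covers] at hc
      push_neg at hc
      obtain ⟨K', hK', hSK', hKK⟩ := hc hSK
      obtain ⟨k, hk, hlt⟩ := ih K' hKK hK' hSK'
      exact ⟨k, hKK.subset hk, hlt⟩
end

section
/- Every system of pre-islands is admissible: if 𝒮 is the set of all pre-islands corresponding to (𝒞, 𝒦, h) for some height function h, then U ∈ 𝒮, ∅ ∉ 𝒮, and for every nonempty antichain 𝒜 ⊆ 𝒮 there exists H ∈ 𝒜 such that every K ∈ 𝒦 with H ⊊ K satisfies K ⊄ ⋃𝒜. -/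
open Finset

variable {U : Type*}

/-- every system of pre-islands is admissible. -/
theorem systemOfPreIslands_admissible [Fintype U] [DecidableEq U] [Nonempty U]
    (𝒞 𝒦 : Finset (Finset U)) (hdom : IslandDomain 𝒞 𝒦) (h : U → ℝ)
    (𝒮 : Finset (Finset U)) (h𝒮 : ∀ S, S ∈ 𝒮 ↔ IsPreIsland 𝒞 𝒦 h S) :
    Admissible 𝒞 𝒦 𝒮 := by
  refine ⟨fun S hS => ((h𝒮 S).1 hS).1, ?_, ?_, ?_⟩
  · intro hemp
    exact ((h𝒮 ∅).1 hemp).2.1.ne_empty rfl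
  · refine (h𝒮 _).2 ⟨hdom.2, Finset.univ_nonempty, ?_⟩
    intro K _ hcov
    exact absurd (Finset.subset_univ K) (not_le_of_gt hcov.1 : ¬K ⊆ _)
  · intro 𝒜 h𝒜S h𝒜ne _
    -- choose H minimizing inf' of h
    have hne : ∀ A ∈ 𝒜, A.Nonempty := fun A hA => ((h𝒮 A).1 (h𝒜S hA)).2.1
    obtain ⟨H, hH𝒜, hHmin⟩ := 𝒜.exists_min_image
      (fun A => if hA : A.Nonempty then A.inf' hA h else 0) h𝒜ne
    refine ⟨H, hH𝒜, ?_⟩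
    intro K hK hHK hKsub
    -- take minimal K' ∈ 𝒦 with H ⊂ K' ⊆ K
    have hKmem : K ∈ 𝒦.filter (fun K' => H ⊂ K' ∧ K' ⊆ K) := by
      simp [hK, hHK]
    obtain ⟨K', hK'mem, hK'min⟩ := (𝒦.filter (fun K' => H ⊂ K' ∧ K' ⊆ K)).exists_min_image
      Finset.card ⟨K, hKmem⟩
    simp only [Finset.mem_filter] at hK'mem
    obtain ⟨hK'𝒦, hHK', hK'K⟩ := hK'mem
    have hcov : Covers 𝒦 H K' := by
      refine ⟨hHK', fun K'' hK''𝒦 hHK'' hK''K' => ?_⟩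
      have : K'' ∈ 𝒦.filter (fun K' => H ⊂ K' ∧ K' ⊆ K) := by
        simp [hK''𝒦, hHK'', hK''K'.subset.trans hK'K]
      exact absurd (hK'min K'' this) (not_le_of_gt (Finset.card_lt_card hK''K'))
    obtain ⟨k, hkK', hk⟩ := ((h𝒮 H).1 (h𝒜S hH𝒜)).2.2 K' hK'𝒦 hcov
    have hkA : ∃ A ∈ 𝒜, k ∈ A := by
      have := hKsub (hK'K hkK')
      simpa [Finset.mem_sup] using this
    obtain ⟨A, hA𝒜, hkA⟩ := hkA
    have hHne := hne H hH𝒜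
    have hAne := hne A hA𝒜
    have h1 : H.inf' hHne h ≤ A.inf' hAne h := by
      have := hHmin A hA𝒜
      simpa [hHne, hAne] using this
    have h2 : A.inf' hAne h ≤ h k := Finset.inf'_le h hkA
    obtain ⟨s, hsH, hs⟩ := H.exists_mem_eq_inf' hHne h
    exact absurd (h1.trans h2) (not_le_of_gt (hs ▸ hk s hsH))
end

section
/- If ℋ ⊆ 𝒞 is an admissible family and h_ℋ is the corresponding canonical height function, then every member of ℋ is a pre-island with respect to (𝒞, 𝒦, h_ℋ). -/
open Finset

variable {U : Type*}

/-- The recursive partition `ℋ = ℋ⁽⁰⁾ ∪ ⋯ ∪ ℋ⁽ʳ⁾` defining the canonical height function: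
`ℋ⁽⁰⁾ = {U}`, and `ℋ⁽ⁱ⁾` consists of those not-yet-used members `H` such that no `K ∈ 𝒦`
with `H ⊊ K` is contained in the union of the not-yet-used members. -/
def levels [Fintype U] [DecidableEq U] (𝒦 ℋ : Finset (Finset U)) : ℕ → Finset (Finset U)
  | 0 => {Finset.univ}
  | (i + 1) =>
      (ℋ \ (Finset.range (i + 1)).attach.sup fun j => levels 𝒦 ℋ j.1).filter fun H =>
        ∀ K ∈ 𝒦, H ⊂ K →
          ¬K ⊆ (ℋ \ (Finset.range (i + 1)).attach.sup fun j => levels 𝒦 ℋ j.1).sup id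
  decreasing_by all_goals exact Finset.mem_range.mp j.2

/-- The canonical height function `h_ℋ(x) = max { i : x ∈ ⋃ ℋ⁽ⁱ⁾ }`. -/
noncomputable def canonicalHeight [Fintype U] [DecidableEq U] (𝒦 ℋ : Finset (Finset U))
    (x : U) : ℝ :=
  ((((Finset.range (ℋ.card + 1)).filter fun i => x ∈ (levels 𝒦 ℋ i).sup id).sup id : ℕ) : ℝ)

/-!
Admissibility guarantees that as long as some member of `ℋ` has not been assigned a level, the
next level is nonempty, so every member of `ℋ` lands in some level `ℋ⁽ʲ⁾` with `j < |ℋ|`. For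
`H ∈ ℋ⁽ⁱ⁺¹⁾` and `K ⊋ H` in `𝒦`, the definition of the level provides a point `k ∈ K` outside
every member of `ℋ⁽ⁱ⁺¹⁾ ∪ ℋ⁽ⁱ⁺²⁾ ∪ ⋯`, so `h(k) ≤ i`, whereas `h ≥ i + 1` on `H`. The only member
of `ℋ⁽⁰⁾` is `U`, which has no proper superset.
-/

/-- Apply admissibility to the maximal members of `ℛ`: they form an antichain with the same
union. -/
theorem Admissible.exists_forall_not_subset_sup [DecidableEq U] [Fintype U]
    {𝒞 𝒦 ℋ : Finset (Finset U)} (hadm : Admissible 𝒞 𝒦 ℋ) {ℛ : Finset (Finset U)}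
    (hℛ : ℛ ⊆ ℋ) (hne : ℛ.Nonempty) : ∃ H ∈ ℛ, ∀ K ∈ 𝒦, H ⊂ K → ¬K ⊆ ℛ.sup id := by
  classical
  set 𝒜 := ℛ.filter fun A => Maximal (· ∈ ℛ) A
  have h𝒜ℛ : 𝒜 ⊆ ℛ := filter_subset _ _
  have hsup : 𝒜.sup id = ℛ.sup id := by
    refine le_antisymm (sup_mono h𝒜ℛ) fun x hx => ?_
    obtain ⟨A, hA, hxA⟩ := mem_sup.1 hx
    obtain ⟨B, hAB, hB⟩ := ℛ.exists_le_maximal hA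
    exact mem_sup.2 ⟨B, mem_filter.2 ⟨hB.1, hB⟩, hAB hxA⟩
  have h𝒜ne : 𝒜.Nonempty := by
    obtain ⟨A, hA⟩ := hne
    obtain ⟨B, -, hB⟩ := ℛ.exists_le_maximal hA
    exact ⟨B, mem_filter.2 ⟨hB.1, hB⟩⟩
  obtain ⟨H, hH, hHK⟩ := hadm.2.2.2 𝒜 (h𝒜ℛ.trans hℛ) h𝒜ne
    fun A hA B hB hAB => (mem_filter.1 hA).2.eq_of_le (h𝒜ℛ hB) hAB
  exact ⟨H, h𝒜ℛ hH, fun K hK hHK' => hsup ▸ hHK K hK hHK'⟩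

theorem Finset.eq_empty_at_card_of_antitone {α : Type*} {s : ℕ → Finset α} (hanti : Antitone s)
    (hstrict : ∀ n, (s n).Nonempty → s (n + 1) ⊂ s n) : s (s 0).card = ∅ := by
  have hcard : ∀ n, (s n).card ≤ (s 0).card - n := by
    intro n
    induction n with
    | zero => simp
    | succ n ih =>
      rcases (s n).eq_empty_or_nonempty with hempty | hne
      · have hle : s (n + 1) ⊆ s n := hanti (Nat.le_add_right n 1)
        rw [hempty, subset_empty] at hle
        simp [hle]
      · have := card_lt_card (hstrict n hne)
        omega
  exact card_eq_zero.1 (by simpa using hcard (s 0).card)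

namespace CanonicalHeight

variable [Fintype U] [DecidableEq U] (𝒦 ℋ : Finset (Finset U))

def remaining (i : ℕ) : Finset (Finset U) :=
  ℋ \ (range i).sup (levels 𝒦 ℋ)

theorem levels_succ (i : ℕ) :
    levels 𝒦 ℋ (i + 1) = (remaining 𝒦 ℋ (i + 1)).filter fun H =>
      ∀ K ∈ 𝒦, H ⊂ K → ¬K ⊆ (remaining 𝒦 ℋ (i + 1)).sup id := by
  rw [levels, remaining, sup_attach]

theorem levels_succ_subset_remaining (i : ℕ) : levels 𝒦 ℋ (i + 1) ⊆ remaining 𝒦 ℋ (i + 1) := by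
  rw [levels_succ]
  exact filter_subset _ _

theorem remaining_succ (i : ℕ) : remaining 𝒦 ℋ (i + 1) = remaining 𝒦 ℋ i \ levels 𝒦 ℋ i := by
  rw [remaining, remaining, range_add_one, sup_insert, _root_.sdiff_sdiff_left, sup_comm]

theorem remaining_antitone : Antitone (remaining 𝒦 ℋ) :=
  antitone_nat_of_succ_le fun i => (remaining_succ 𝒦 ℋ i).symm ▸ sdiff_subset

theorem remaining_zero : remaining 𝒦 ℋ 0 = ℋ := by
  simp [remaining]

variable {𝒦 ℋ}

theorem levels_succ_nonempty {𝒞 : Finset (Finset U)} (hadm : Admissible 𝒞 𝒦 ℋ) {i : ℕ}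
    (hne : (remaining 𝒦 ℋ (i + 1)).Nonempty) : (levels 𝒦 ℋ (i + 1)).Nonempty := by
  obtain ⟨H, hH, hHK⟩ := hadm.exists_forall_not_subset_sup sdiff_subset hne
  exact ⟨H, by rw [levels_succ, mem_filter]; exact ⟨hH, hHK⟩⟩

theorem remaining_succ_ssubset {𝒞 : Finset (Finset U)} (hadm : Admissible 𝒞 𝒦 ℋ) {i : ℕ}
    (hne : (remaining 𝒦 ℋ i).Nonempty) : remaining 𝒦 ℋ (i + 1) ⊂ remaining 𝒦 ℋ i := by
  have hlevel : ∃ L ∈ remaining 𝒦 ℋ i, L ∈ levels 𝒦 ℋ i := by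
    cases i with
    | zero =>
      refine ⟨univ, ?_, by rw [levels]; exact mem_singleton_self _⟩
      rw [remaining_zero]
      exact hadm.2.2.1
    | succ i =>
      obtain ⟨L, hL⟩ := levels_succ_nonempty hadm hne
      exact ⟨L, levels_succ_subset_remaining 𝒦 ℋ i hL, hL⟩
  obtain ⟨L, hLrem, hLlev⟩ := hlevel
  rw [remaining_succ, ssubset_iff_of_subset sdiff_subset]
  exact ⟨L, hLrem, fun h => (mem_sdiff.1 h).2 hLlev⟩

theorem exists_lt_card_mem_levels {𝒞 : Finset (Finset U)} (hadm : Admissible 𝒞 𝒦 ℋ)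
    {H : Finset U} (hH : H ∈ ℋ) : ∃ j < ℋ.card, H ∈ levels 𝒦 ℋ j := by
  have hempty : remaining 𝒦 ℋ ℋ.card = ∅ := by
    simpa only [remaining_zero] using Finset.eq_empty_at_card_of_antitone
      (remaining_antitone 𝒦 ℋ) fun i => remaining_succ_ssubset hadm
  have hH' : H ∉ remaining 𝒦 ℋ ℋ.card := hempty ▸ notMem_empty H
  rw [remaining, mem_sdiff, not_and, not_not] at hH'
  obtain ⟨j, hj, hHj⟩ := mem_sup.1 (hH' hH)
  exact ⟨j, mem_range.1 hj, hHj⟩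

theorem sup_levels_subset_sup_remaining {i j : ℕ} (hij : i ≤ j) (hi : i ≠ 0) :
    (levels 𝒦 ℋ j).sup id ⊆ (remaining 𝒦 ℋ i).sup id := by
  obtain ⟨m, rfl⟩ := Nat.exists_eq_succ_of_ne_zero (by omega : j ≠ 0)
  exact sup_mono ((levels_succ_subset_remaining 𝒦 ℋ m).trans (remaining_antitone 𝒦 ℋ hij))

theorem exists_mem_notMem_sup_remaining {H K : Finset U} {i : ℕ}
    (hH : H ∈ levels 𝒦 ℋ (i + 1)) (hK : K ∈ 𝒦) (hHK : H ⊂ K) :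
    ∃ k ∈ K, k ∉ (remaining 𝒦 ℋ (i + 1)).sup id := by
  rw [levels_succ, mem_filter] at hH
  exact not_subset.1 (hH.2 K hK hHK)

theorem le_canonicalHeight {H : Finset U} {j : ℕ} (hj : j ≤ ℋ.card) (hH : H ∈ levels 𝒦 ℋ j)
    {x : U} (hx : x ∈ H) : (j : ℝ) ≤ canonicalHeight 𝒦 ℋ x := by
  have hmem : j ∈ (range (ℋ.card + 1)).filter fun i => x ∈ (levels 𝒦 ℋ i).sup id :=
    mem_filter.2 ⟨mem_range.2 (Nat.lt_succ_of_le hj), mem_sup.2 ⟨H, hH, hx⟩⟩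
  exact Nat.cast_le.2 (le_sup (f := id) hmem)

theorem canonicalHeight_lt {x : U} {i : ℕ} (hi : i ≠ 0) (hx : x ∉ (remaining 𝒦 ℋ i).sup id) :
    canonicalHeight 𝒦 ℋ x < i := by
  rw [canonicalHeight, Nat.cast_lt, Finset.sup_lt_iff (Nat.pos_of_ne_zero hi)]
  intro j hj
  by_contra! hij
  exact hx (sup_levels_subset_sup_remaining hij hi (mem_filter.1 hj).2)

end CanonicalHeight

open CanonicalHeight in
theorem admissible_preIsland_canonicalHeight_general [Fintype U] [DecidableEq U]
    (𝒞 𝒦 ℋ : Finset (Finset U))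
    (hadm : Admissible 𝒞 𝒦 ℋ) :
    ∀ H ∈ ℋ, IsPreIsland 𝒞 𝒦 (canonicalHeight 𝒦 ℋ) H := by
  intro H hH
  refine ⟨hadm.1 hH, nonempty_iff_ne_empty.2 fun h => hadm.2.1 (h ▸ hH), fun K hK hHK => ?_⟩
  obtain ⟨j, hj, hHj⟩ := exists_lt_card_mem_levels hadm hH
  cases j with
  | zero =>
    rw [levels, mem_singleton] at hHj
    exact absurd (subset_univ K) (hHj ▸ hHK.1).not_subset
  | succ i =>
    obtain ⟨k, hkK, hk⟩ := exists_mem_notMem_sup_remaining hHj hK hHK.1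
    exact ⟨k, hkK, fun s hs => (canonicalHeight_lt i.succ_ne_zero hk).trans_le
      (le_canonicalHeight hj.le hHj hs)⟩

/-- every member of an admissible family `ℋ` is a pre-island with respect to
the canonical height function of `ℋ`. -/
theorem admissible_preIsland_canonicalHeight [Fintype U] [DecidableEq U] [Nonempty U]
    (𝒞 𝒦 ℋ : Finset (Finset U)) (hdom : IslandDomain 𝒞 𝒦)
    (hadm : Admissible 𝒞 𝒦 ℋ) :
    ∀ H ∈ ℋ, IsPreIsland 𝒞 𝒦 (canonicalHeight 𝒦 ℋ) H :=
  admissible_preIsland_canonicalHeight_general 𝒞 𝒦 ℋ hadm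
end

section
/- A subfamily of 𝒞 is a maximal system of pre-islands (with respect to inclusion, among all systems of pre-islands corresponding to (𝒞, 𝒦)) if and only if it is a maximal admissible family. -/
open Finset

variable {U : Type*}

/-
A system of pre-islands is admissible: given a nonempty subfamily, a member containing a point of
least height in its union cannot have a strict superset in `𝒦` inside that union, since a cover of
it would have to contain a strictly lower point. Conversely an admissible family `ℋ` lies in a
system of pre-islands: enumerate `U` from the lowest height upwards, always choosing a point that
lies in no member of `ℋ` having a cover inside the set of points not yet chosen; admissibility,
applied to the maximal such members, guarantees such a point exists. Then for `H ∈ ℋ` and a cover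
`K` of `H`, the first point of `K` to be chosen lies outside `H`, below all of `H`.
Hence the two kinds of families have the same maximal elements.
-/

theorem maximal_iff_maximal_of_forall_exists_le {α : Type*} [PartialOrder α] {P Q : α → Prop}
    (hPQ : ∀ x, P x → Q x) (hQP : ∀ x, Q x → ∃ y, P y ∧ x ≤ y) {x : α} :
    Maximal P x ↔ Maximal Q x := by
  constructor
  · intro hx
    refine ⟨hPQ x hx.prop, fun y hy hxy => ?_⟩
    obtain ⟨z, hz, hyz⟩ := hQP y hy
    exact hyz.trans (hx.2 hz (hxy.trans hyz))
  · intro hx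
    obtain ⟨y, hy, hxy⟩ := hQP x hx.prop
    have hxy' : y = x := hx.eq_of_ge (hPQ y hy) hxy
    subst hxy'
    exact ⟨hy, fun z hz => hx.2 (hPQ z hz)⟩

theorem exists_covers_subset_of_ssubset {𝒦 : Finset (Finset U)} {S K : Finset U} (hK : K ∈ 𝒦)
    (hSK : S ⊂ K) : ∃ K' ∈ 𝒦, K' ⊆ K ∧ Covers 𝒦 S K' := by
  classical
  obtain ⟨K', hK'K, hmin⟩ := (𝒦.filter (S ⊂ ·)).exists_le_minimal (mem_filter.2 ⟨hK, hSK⟩)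
  obtain ⟨hK', hSK'⟩ := mem_filter.1 hmin.prop
  exact ⟨K', hK', hK'K, hSK', fun K'' hK'' hSK'' hK''K' =>
    hK''K'.not_subset (hmin.2 (mem_filter.2 ⟨hK'', hSK''⟩) hK''K'.subset)⟩

theorem IsPreIsland.minLt_of_ssubset {𝒞 𝒦 : Finset (Finset U)} {h : U → ℝ} {S K : Finset U}
    (hS : IsPreIsland 𝒞 𝒦 h S) (hK : K ∈ 𝒦) (hSK : S ⊂ K) : MinLt h K S := by
  obtain ⟨K', hK', hK'K, hcov⟩ := exists_covers_subset_of_ssubset hK hSK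
  obtain ⟨k, hk, hlt⟩ := hS.2.2 K' hK' hcov
  exact ⟨k, hK'K hk, hlt⟩

theorem IsPreIsland.univ [Fintype U] [Nonempty U] {𝒞 𝒦 : Finset (Finset U)} {h : U → ℝ}
    (hU : Finset.univ ∈ 𝒞) : IsPreIsland 𝒞 𝒦 h Finset.univ :=
  ⟨hU, univ_nonempty, fun _ _ hcov => absurd (subset_univ _) hcov.1.not_subset⟩

theorem IsSystemOfPreIslands.admissible [Fintype U] [DecidableEq U] [Nonempty U]
    {𝒞 𝒦 𝒮 : Finset (Finset U)} (hU : Finset.univ ∈ 𝒞) (h𝒮 : IsSystemOfPreIslands 𝒞 𝒦 𝒮) :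
    Admissible 𝒞 𝒦 𝒮 := by
  obtain ⟨h, hmem⟩ := h𝒮
  refine ⟨fun S hS => ((hmem S).1 hS).1, fun hempty => not_nonempty_empty ((hmem ∅).1 hempty).2.1,
    (hmem _).2 (.univ hU), fun 𝒜 h𝒜 h𝒜ne _ => ?_⟩
  obtain ⟨A, hA⟩ := h𝒜ne
  have hsup : (𝒜.sup id).Nonempty := ((hmem A).1 (h𝒜 hA)).2.1.mono (le_sup (f := id) hA)
  obtain ⟨p, hp, hp_min⟩ := exists_min_image (𝒜.sup id) h hsup
  obtain ⟨H, hH, hpH⟩ := mem_sup.1 hp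
  refine ⟨H, hH, fun K hK hHK hKsup => ?_⟩
  obtain ⟨k, hk, hlt⟩ := ((hmem H).1 (h𝒜 hH)).minLt_of_ssubset hK hHK
  exact (hlt p hpH).not_ge (hp_min k (hKsup hk))

namespace Admissible

variable [Fintype U] [DecidableEq U] {𝒞 𝒦 ℋ : Finset (Finset U)}

theorem exists_forall_not_subset_sup_s8 (hℋ : Admissible 𝒞 𝒦 ℋ) {𝒢 : Finset (Finset U)}
    (h𝒢 : 𝒢 ⊆ ℋ) (h𝒢ne : 𝒢.Nonempty) :
    ∃ H ∈ 𝒢, ∀ K ∈ 𝒦, H ⊂ K → ¬K ⊆ 𝒢.sup id := by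
  classical
  set 𝒜 := 𝒢.filter (Maximal (· ∈ 𝒢))
  have h𝒜𝒢 : 𝒜 ⊆ 𝒢 := filter_subset _ _
  have hle : ∀ G ∈ 𝒢, ∃ A ∈ 𝒜, G ⊆ A := fun G hG =>
    let ⟨A, hGA, hA⟩ := 𝒢.exists_le_maximal hG
    ⟨A, mem_filter.2 ⟨hA.prop, hA⟩, hGA⟩
  have hsup : 𝒢.sup id = 𝒜.sup id :=
    le_antisymm (Finset.sup_le fun G hG =>
      let ⟨A, hA, hGA⟩ := hle G hG; hGA.trans (le_sup (f := id) hA)) (sup_mono h𝒜𝒢)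
  obtain ⟨G, hG⟩ := h𝒢ne
  obtain ⟨A₀, hA₀, -⟩ := hle G hG
  obtain ⟨H, hH, hHK⟩ := hℋ.2.2.2 𝒜 (h𝒜𝒢.trans h𝒢) ⟨A₀, hA₀⟩
    fun A hA B hB hAB => (mem_filter.1 hA).2.eq_of_le (mem_filter.1 hB).1 hAB
  exact ⟨H, h𝒜𝒢 hH, hsup ▸ hHK⟩

theorem exists_mem_forall_covers_subset (hℋ : Admissible 𝒞 𝒦 ℋ) {R : Finset U}
    (hR : R.Nonempty) :
    ∃ u ∈ R, ∀ H ∈ ℋ, ∀ K ∈ 𝒦, Covers 𝒦 H K → K ⊆ R → u ∉ H := by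
  classical
  set 𝒢 := ℋ.filter fun H => ∃ K ∈ 𝒦, Covers 𝒦 H K ∧ K ⊆ R
  suffices ∃ u ∈ R, u ∉ 𝒢.sup id by
    obtain ⟨u, huR, hu𝒢⟩ := this
    exact ⟨u, huR, fun H hH K hK hcov hKR huH =>
      hu𝒢 (le_sup (f := id) (mem_filter.2 ⟨hH, K, hK, hcov, hKR⟩) huH)⟩
  by_contra! hR𝒢
  obtain ⟨G, hG⟩ : 𝒢.Nonempty := by
    obtain ⟨u, hu⟩ := hR
    obtain ⟨G, hG, -⟩ := mem_sup.1 (hR𝒢 u hu)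
    exact ⟨G, hG⟩
  obtain ⟨H, hH, hHK⟩ := hℋ.exists_forall_not_subset_sup_s8 (filter_subset _ _) ⟨G, hG⟩
  obtain ⟨K, hK, hcov, hKR⟩ := (mem_filter.1 hH).2
  exact hHK K hK hcov.1 fun u hu => hR𝒢 u (hKR hu)

theorem exists_height_minLt_of_subset (hℋ : Admissible 𝒞 𝒦 ℋ) (R : Finset U) :
    ∃ h : U → ℝ, ∀ H ∈ ℋ, ∀ K ∈ 𝒦, Covers 𝒦 H K → K ⊆ R → MinLt h K H := by
  induction R using Finset.strongInduction with
  | H R ih =>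
    rcases R.eq_empty_or_nonempty with rfl | hR
    · exact ⟨0, fun H _ K _ hcov hK => absurd (subset_empty.1 hK ▸ hcov.1) (not_ssubset_empty H)⟩
    obtain ⟨u, huR, hu⟩ := hℋ.exists_mem_forall_covers_subset hR
    obtain ⟨h, hh⟩ := ih (R.erase u) (erase_ssubset huR)
    refine ⟨fun v => if v = u then 0 else Real.exp (h v), fun H hH K hK hcov hKR => ?_⟩
    by_cases huK : u ∈ K
    · refine ⟨u, huK, fun s hs => ?_⟩
      have hsu : s ≠ u := ne_of_mem_of_not_mem hs (hu H hH K hK hcov hKR)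
      simpa [hsu] using Real.exp_pos (h s)
    · obtain ⟨k, hk, hlt⟩ := hh H hH K hK hcov (subset_erase.2 ⟨hKR, huK⟩)
      refine ⟨k, hk, fun s hs => ?_⟩
      have hku : k ≠ u := ne_of_mem_of_not_mem hk huK
      have hsu : s ≠ u := ne_of_mem_of_not_mem (hcov.1.subset hs) huK
      simpa [hku, hsu] using hlt s hs

theorem exists_isSystemOfPreIslands_superset (hℋ : Admissible 𝒞 𝒦 ℋ) :
    ∃ 𝒮, IsSystemOfPreIslands 𝒞 𝒦 𝒮 ∧ ℋ ⊆ 𝒮 := by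
  classical
  obtain ⟨h, hh⟩ := hℋ.exists_height_minLt_of_subset Finset.univ
  refine ⟨𝒞.filter (IsPreIsland 𝒞 𝒦 h), ⟨h, fun S => ?_⟩, fun H hH => ?_⟩
  · simpa using fun hS : IsPreIsland 𝒞 𝒦 h S => hS.1
  · have hHne : H.Nonempty := nonempty_iff_ne_empty.2 fun hempty => hℋ.2.1 (hempty ▸ hH)
    exact mem_filter.2 ⟨hℋ.1 hH, hℋ.1 hH, hHne, fun K hK hcov => hh H hH K hK hcov (subset_univ K)⟩

end Admissible

theorem maximal_system_iff_maximal_admissible_general [Fintype U] [DecidableEq U] [Nonempty U]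
    (𝒞 𝒦 𝒮 : Finset (Finset U)) (hdom : IslandDomain 𝒞 𝒦) :
    (IsSystemOfPreIslands 𝒞 𝒦 𝒮 ∧
        ∀ 𝒮' : Finset (Finset U), IsSystemOfPreIslands 𝒞 𝒦 𝒮' → 𝒮 ⊆ 𝒮' → 𝒮 = 𝒮') ↔
      (Admissible 𝒞 𝒦 𝒮 ∧
        ∀ ℋ : Finset (Finset U), Admissible 𝒞 𝒦 ℋ → 𝒮 ⊆ ℋ → 𝒮 = ℋ) := by
  have hmax := maximal_iff_maximal_of_forall_exists_le (P := IsSystemOfPreIslands 𝒞 𝒦)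
    (Q := Admissible 𝒞 𝒦) (x := 𝒮)
    (fun _ h𝒮 => IsSystemOfPreIslands.admissible hdom.2 h𝒮)
    (fun _ hℋ => Admissible.exists_isSystemOfPreIslands_superset hℋ)
  exact maximal_iff.symm.trans (hmax.trans maximal_iff)

/-- maximal systems of pre-islands = maximal admissible families. -/
theorem maximal_system_iff_maximal_admissible [Fintype U] [DecidableEq U] [Nonempty U]
    (𝒞 𝒦 𝒮 : Finset (Finset U)) (hdom : IslandDomain 𝒞 𝒦) (h𝒮 : 𝒮 ⊆ 𝒞) :
    (IsSystemOfPreIslands 𝒞 𝒦 𝒮 ∧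
        ∀ 𝒮' : Finset (Finset U), IsSystemOfPreIslands 𝒞 𝒦 𝒮' → 𝒮 ⊆ 𝒮' → 𝒮 = 𝒮') ↔
      (Admissible 𝒞 𝒦 𝒮 ∧
        ∀ ℋ : Finset (Finset U), Admissible 𝒞 𝒦 ℋ → 𝒮 ⊆ ℋ → 𝒮 = ℋ) :=
  maximal_system_iff_maximal_admissible_general 𝒞 𝒦 𝒮 hdom
end

section
/- For any island domain (𝒞, 𝒦), the following are equivalent: (i) every subset containing U of a system of pre-islands is again a system of pre-islands; (ii) the systems of pre-islands corresponding to (𝒞, 𝒦) are exactly the admissible families. -/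
open Finset

variable {U : Type*}

/-- Every `K ∈ 𝒦` strictly above `H` contains a cover of `H` in `𝒦`. -/
lemma aux_cover (𝒦 : Finset (Finset U)) {H K : Finset U} (hK : K ∈ 𝒦) (hHK : H ⊂ K) :
    ∃ K₀ ∈ 𝒦, Covers 𝒦 H K₀ ∧ K₀ ⊆ K := by
  classical
  set T := 𝒦.filter (fun K' => H ⊂ K' ∧ K' ⊆ K) with hT
  have hKT : K ∈ T := by simp [hT, hK, hHK]
  obtain ⟨K₀, hK₀T, hmin⟩ := T.exists_min_image Finset.card ⟨K, hKT⟩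
  simp only [hT, mem_filter] at hK₀T
  refine ⟨K₀, hK₀T.1, ⟨hK₀T.2.1, ?_⟩, hK₀T.2.2⟩
  intro K' hK'𝒦 hHK' hK'K₀
  have hK'T : K' ∈ T := by
    simp only [hT, mem_filter]
    exact ⟨hK'𝒦, hHK', hK'K₀.subset.trans hK₀T.2.2⟩
  exact absurd (Finset.card_lt_card hK'K₀) (not_lt.mpr (hmin K' hK'T))

/-- Every system of pre-islands is admissible. -/
lemma system_admissible [Fintype U] [DecidableEq U] [Nonempty U]
    (𝒞 𝒦 𝒮 : Finset (Finset U)) (hdom : IslandDomain 𝒞 𝒦)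
    (hsys : IsSystemOfPreIslands 𝒞 𝒦 𝒮) : Admissible 𝒞 𝒦 𝒮 := by
  classical
  obtain ⟨h, hmem⟩ := hsys
  refine ⟨fun S hS => ((hmem S).1 hS).1, ?_, ?_, ?_⟩
  · intro hbad
    exact absurd ((hmem _).1 hbad).2.1 (by simp)
  · refine (hmem _).2 ⟨hdom.2, univ_nonempty, ?_⟩
    intro K hK hcov
    exact absurd (subset_univ K) hcov.1.not_subset
  · intro 𝒜 h𝒜S h𝒜ne _hanti
    set f : Finset U → ℝ := fun A => if hA : A.Nonempty then A.inf' hA h else 0 with hf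
    obtain ⟨H, hH𝒜, hHmin⟩ := 𝒜.exists_min_image f h𝒜ne
    refine ⟨H, hH𝒜, ?_⟩
    intro K hK hHK hKsup
    have hHpre := (hmem H).1 (h𝒜S hH𝒜)
    obtain ⟨K₀, hK₀𝒦, hcov, hK₀K⟩ := aux_cover 𝒦 hK hHK
    obtain ⟨k, hkK₀, hk⟩ := hHpre.2.2 K₀ hK₀𝒦 hcov
    obtain ⟨A, hA𝒜, hkA⟩ := Finset.mem_sup.1 (hKsup (hK₀K hkK₀))
    have hAne : A.Nonempty := ⟨k, hkA⟩
    have hHne : H.Nonempty := hHpre.2.1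
    have h1 : f A ≤ h k := by
      simp only [hf, dif_pos hAne]
      exact Finset.inf'_le _ hkA
    have h2 : f H ≤ f A := hHmin A hA𝒜
    obtain ⟨s, hsH, hs⟩ := Finset.exists_mem_eq_inf' hHne h
    have h3 : h k < f H := by
      simp only [hf, dif_pos hHne, hs]
      exact hk s hsH
    linarith

/-- Greedy construction of a height function making each member of an
admissible family a pre-island. -/
lemma greedy [Fintype U] [DecidableEq U] (𝒞 𝒦 ℋ : Finset (Finset U))
    (hadm : Admissible 𝒞 𝒦 ℋ) :
    ∀ n : ℕ, ∀ R : Finset U, R.card ≤ n →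
      ∃ g : U → ℕ, (∀ v ∈ R, 1 ≤ g v) ∧
        ∀ H ∈ ℋ, H ⊆ R → ∀ K ∈ 𝒦, H ⊂ K → K ⊆ R →
          ∃ k ∈ K, ∀ s ∈ H, g k < g s := by
  classical
  intro n
  induction n with
  | zero =>
    intro R hR
    have hRe : R = ∅ := card_eq_zero.1 (Nat.le_zero.1 hR)
    subst hRe
    refine ⟨fun _ => 1, by simp, ?_⟩
    intro H _ _ K _ hHK hKR
    have : K = ∅ := subset_empty.1 hKR
    subst this
    exact absurd hHK (Finset.not_ssubset_empty H)
  | succ n IH =>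
    intro R hR
    by_cases hRn : R.card ≤ n
    · exact IH R hRn
    have hRne : R.Nonempty := card_pos.1 (by omega)
    set 𝔅 := ℋ.filter (fun H => H ⊆ R ∧ ∃ K ∈ 𝒦, H ⊂ K ∧ K ⊆ R) with h𝔅
    have hu : ∃ u ∈ R, u ∉ 𝔅.sup id := by
      by_contra hcon
      push_neg at hcon
      set 𝒜 := 𝔅.filter (fun H => ∀ H' ∈ 𝔅, H ⊆ H' → H = H') with h𝒜
      have hmaxl : ∀ H ∈ 𝔅, ∃ M ∈ 𝒜, H ⊆ M := by
        intro H hH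
        obtain ⟨M, hMT, hMmax⟩ :=
          (𝔅.filter (fun H' => H ⊆ H')).exists_max_image Finset.card
            ⟨H, by simp [hH]⟩
        simp only [mem_filter] at hMT
        refine ⟨M, ?_, hMT.2⟩
        simp only [h𝒜, mem_filter]
        refine ⟨hMT.1, fun H' hH' hMH' => ?_⟩
        have hH'T : H' ∈ 𝔅.filter (fun H'' => H ⊆ H'') := by
          simp only [mem_filter]
          exact ⟨hH', hMT.2.trans hMH'⟩
        exact Finset.eq_of_subset_of_card_le hMH' (hMmax H' hH'T)
      have hRsub : ∀ x ∈ R, x ∈ 𝒜.sup id := by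
        intro x hx
        obtain ⟨H, hH, hxH⟩ := Finset.mem_sup.1 (hcon x hx)
        obtain ⟨M, hM, hHM⟩ := hmaxl H hH
        exact Finset.mem_sup.2 ⟨M, hM, hHM hxH⟩
      have h𝒜ne : 𝒜.Nonempty := by
        obtain ⟨x, hx⟩ := hRne
        obtain ⟨H, hH, _⟩ := Finset.mem_sup.1 (hcon x hx)
        obtain ⟨M, hM, _⟩ := hmaxl H hH
        exact ⟨M, hM⟩
      have h𝒜ℋ : 𝒜 ⊆ ℋ := (filter_subset _ _).trans (filter_subset _ _)
      have hanti : ∀ A ∈ 𝒜, ∀ B ∈ 𝒜, A ⊆ B → A = B := by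
        intro A hA B hB hAB
        simp only [h𝒜, mem_filter] at hA hB
        exact hA.2 B hB.1 hAB
      obtain ⟨H, hH𝒜, hHprop⟩ := hadm.2.2.2 𝒜 h𝒜ℋ h𝒜ne hanti
      have hH𝔅 : H ∈ 𝔅 := mem_of_mem_filter H hH𝒜
      simp only [h𝔅, mem_filter] at hH𝔅
      obtain ⟨-, -, K, hK𝒦, hHK, hKR⟩ := hH𝔅
      exact hHprop K hK𝒦 hHK (fun x hx => hRsub x (hKR hx))
    obtain ⟨u, huR, hu𝔅⟩ := hu
    have hcard : (R.erase u).card ≤ n := by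
      have := Finset.card_erase_of_mem huR
      omega
    obtain ⟨g', hg'1, hg'⟩ := IH (R.erase u) hcard
    refine ⟨fun v => if v = u then 1 else g' v + 1, ?_, ?_⟩
    · intro v _
      by_cases hv : v = u <;> simp [hv]
    · intro H hHℋ hHR K hK𝒦 hHK hKR
      have huH : u ∉ H := by
        intro huH
        apply hu𝔅
        refine Finset.mem_sup.2 ⟨H, ?_, huH⟩
        simp only [h𝔅, mem_filter]
        exact ⟨hHℋ, hHR, K, hK𝒦, hHK, hKR⟩
      have hHR' : H ⊆ R.erase u := fun x hx =>
        Finset.mem_erase.2 ⟨fun he => huH (he ▸ hx), hHR hx⟩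
      by_cases huK : u ∈ K
      · refine ⟨u, huK, ?_⟩
        intro s hsH
        have hsu : s ≠ u := fun he => huH (he ▸ hsH)
        have h1s : 1 ≤ g' s := hg'1 s (hHR' hsH)
        simp only [hsu, if_true, if_false, if_neg hsu]
        simp
        omega
      · have hKR' : K ⊆ R.erase u := fun x hx =>
          Finset.mem_erase.2 ⟨fun he => huK (he ▸ hx), hKR hx⟩
        obtain ⟨k, hkK, hk⟩ := hg' H hHℋ hHR' K hK𝒦 hHK hKR'
        refine ⟨k, hkK, fun s hsH => ?_⟩
        have hku : k ≠ u := fun he => huK (he ▸ hkK)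
        have hsu : s ≠ u := fun he => huH (he ▸ hsH)
        simp only [if_neg hku, if_neg hsu]
        have := hk s hsH
        omega

/-- Every admissible family is contained in a system of pre-islands. -/
lemma admissible_subset_system [Fintype U] [DecidableEq U] (𝒞 𝒦 ℋ : Finset (Finset U))
    (hadm : Admissible 𝒞 𝒦 ℋ) :
    ∃ 𝒮, IsSystemOfPreIslands 𝒞 𝒦 𝒮 ∧ ℋ ⊆ 𝒮 := by
  classical
  obtain ⟨g, -, hg⟩ := greedy 𝒞 𝒦 ℋ hadm (univ : Finset U).card univ le_rfl
  set h : U → ℝ := fun u => (g u : ℝ) with hh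
  refine ⟨𝒞.filter (fun S => IsPreIsland 𝒞 𝒦 h S), ⟨h, fun S => ?_⟩, ?_⟩
  · simp only [mem_filter]
    exact ⟨fun hp => hp.2, fun hp => ⟨hp.1, hp⟩⟩
  · intro H hH
    simp only [mem_filter]
    have hpre : IsPreIsland 𝒞 𝒦 h H := by
      refine ⟨hadm.1 hH, ?_, ?_⟩
      · exact nonempty_iff_ne_empty.2 (fun he => hadm.2.1 (he ▸ hH))
      · intro K hK hcov
        obtain ⟨k, hkK, hk⟩ := hg H hH (subset_univ _) K hK hcov.1 (subset_univ _)
        refine ⟨k, hkK, fun s hs => ?_⟩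
        simp only [hh]
        exact_mod_cast hk s hs
    exact ⟨hpre.1, hpre⟩

/-- subsets (containing `U`) of systems of pre-islands are systems of
pre-islands iff systems of pre-islands are exactly the admissible families. -/
theorem subsystem_iff_admissible_characterization [Fintype U] [DecidableEq U] [Nonempty U]
    (𝒞 𝒦 : Finset (Finset U)) (hdom : IslandDomain 𝒞 𝒦) :
    (∀ 𝒮 𝒮' : Finset (Finset U), IsSystemOfPreIslands 𝒞 𝒦 𝒮 → 𝒮' ⊆ 𝒮 →
        Finset.univ ∈ 𝒮' → IsSystemOfPreIslands 𝒞 𝒦 𝒮') ↔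
      (∀ ℋ : Finset (Finset U), IsSystemOfPreIslands 𝒞 𝒦 ℋ ↔ Admissible 𝒞 𝒦 ℋ) := by
  constructor
  · intro hsub ℋ
    constructor
    · exact fun hsys => system_admissible 𝒞 𝒦 ℋ hdom hsys
    · intro hadm
      obtain ⟨𝒮, hsys, hsub'⟩ := admissible_subset_system 𝒞 𝒦 ℋ hadm
      exact hsub 𝒮 ℋ hsys hsub' hadm.2.2.1
  · intro hchar 𝒮 𝒮' hsys hsub huniv
    rw [hchar] at hsys ⊢
    obtain ⟨h1, h2, h3, h4⟩ := hsys
    exact ⟨hsub.trans h1, fun he => h2 (hsub he), huniv,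
      fun 𝒜 h𝒜 hne hanti => h4 𝒜 (h𝒜.trans hsub) hne hanti⟩
end

section
/- If (𝒞, 𝒦) is a connective island domain, then every admissible subfamily of 𝒞 is CDW-independent (i.e., CD-independent and weakly independent). -/
open Finset

variable {U : Type*}

/-!
Apply admissibility to a suitable antichain `𝒜 ⊆ ℋ` to get `H ∈ 𝒜` with no proper superset
`K ∈ 𝒦` inside `⋃ 𝒜`. By connectivity, every `B ∈ 𝒞` with `B ⊆ ⋃ 𝒜` that meets `H` is then
contained in `H`, since otherwise some `K` with `H ⊊ K ⊆ H ∪ B` exists. For CD-independence take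
`𝒜 = {A, B}` with `A`, `B` incomparable and intersecting; for weak independence of `H ⊆ ⋃ 𝒢`
take for `𝒜` the maximal members of `𝒢` that meet `H`: they still cover `H`, so `H` is contained
in one of them.
-/

theorem Finset.sup_filter_maximal {α : Type*} [SemilatticeSup α] [OrderBot α] (s : Finset α)
    [DecidablePred (Maximal (· ∈ s))] : {a ∈ s | Maximal (· ∈ s) a}.sup id = s.sup id := by
  refine le_antisymm (sup_mono (filter_subset _ _)) (Finset.sup_le fun a ha => ?_)
  obtain ⟨b, hab, hb⟩ := s.exists_le_maximal ha
  exact hab.trans (le_sup (f := id) (mem_filter.2 ⟨hb.1, hb⟩))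

theorem Finset.subset_sup_filter_inter_nonempty [DecidableEq U] {H : Finset U}
    {𝒢 : Finset (Finset U)} (hH : H ⊆ 𝒢.sup id) :
    H ⊆ {G ∈ 𝒢 | (G ∩ H).Nonempty}.sup id := by
  intro x hx
  obtain ⟨G, hG, hxG⟩ := mem_sup.1 (hH hx)
  exact mem_sup.2 ⟨G, mem_filter.2 ⟨hG, x, mem_inter.2 ⟨hxG, hx⟩⟩, hxG⟩

section

variable [Fintype U] [DecidableEq U] {𝒞 𝒦 ℋ : Finset (Finset U)}

theorem Admissible.exists_forall_subset_of_inter_nonempty (hconn : Connective 𝒞 𝒦)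
    (hadm : Admissible 𝒞 𝒦 ℋ) {𝒜 : Finset (Finset U)} (h𝒜 : 𝒜 ⊆ ℋ) (hne : 𝒜.Nonempty)
    (hanti : ∀ A ∈ 𝒜, ∀ B ∈ 𝒜, A ⊆ B → A = B) :
    ∃ H ∈ 𝒜, ∀ B ∈ 𝒞, B ⊆ 𝒜.sup id → (H ∩ B).Nonempty → B ⊆ H := by
  obtain ⟨H, hH, hnoK⟩ := hadm.2.2.2 𝒜 h𝒜 hne hanti
  refine ⟨H, hH, fun B hB hB𝒜 hHB => ?_⟩
  by_contra hBH
  obtain ⟨K, hK, hHK, hKHB⟩ := hconn H (hadm.1 (h𝒜 hH)) B hB hHB hBH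
  exact hnoK K hK hHK (hKHB.trans (union_subset (le_sup (f := id) hH) hB𝒜))

theorem Admissible.cdIndependent (hconn : Connective 𝒞 𝒦) (hadm : Admissible 𝒞 𝒦 ℋ) :
    CDIndependent ℋ := by
  intro A hA B hB
  by_contra! h
  obtain ⟨hAB, hBA, hmeet⟩ := h
  have hsup : ({A, B} : Finset (Finset U)).sup id = A ∪ B := by simp
  obtain ⟨H, hH, habsorb⟩ := hadm.exists_forall_subset_of_inter_nonempty hconn
    (insert_subset hA (singleton_subset_iff.2 hB)) (insert_nonempty _ _)
    (by simp only [mem_insert, mem_singleton]; grind)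
  rw [hsup] at habsorb
  rcases mem_insert.1 hH with rfl | hH
  · exact hBA (habsorb B (hadm.1 hB) subset_union_right hmeet)
  · rw [mem_singleton.1 hH] at habsorb
    exact hAB (habsorb A (hadm.1 hA) subset_union_left (inter_comm A B ▸ hmeet))

theorem Admissible.weaklyIndependent (hconn : Connective 𝒞 𝒦) (hadm : Admissible 𝒞 𝒦 ℋ) :
    WeaklyIndependent ℋ := by
  classical
  intro H hH 𝒢 h𝒢 _ hH𝒢
  set ℱ := {G ∈ 𝒢 | (G ∩ H).Nonempty}
  set 𝒜 := {G ∈ ℱ | Maximal (· ∈ ℱ) G}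
  have hH𝒜 : H ⊆ 𝒜.sup id := by
    rw [Finset.sup_filter_maximal]
    exact subset_sup_filter_inter_nonempty hH𝒢
  have h𝒜ne : 𝒜.Nonempty := by
    rw [nonempty_iff_ne_empty]
    intro h𝒜
    rw [h𝒜, sup_empty, bot_eq_empty, subset_empty] at hH𝒜
    exact hadm.2.1 (hH𝒜 ▸ hH)
  have h𝒜𝒢 : 𝒜 ⊆ 𝒢 := (filter_subset _ _).trans (filter_subset _ _)
  obtain ⟨M, hM, habsorb⟩ := hadm.exists_forall_subset_of_inter_nonempty hconn
    (h𝒜𝒢.trans h𝒢) h𝒜ne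
    (fun X hX Y hY hXY => (mem_filter.1 hX).2.eq_of_le (mem_filter.1 hY).1 hXY)
  have hMH : (M ∩ H).Nonempty := (mem_filter.1 (mem_filter.1 hM).1).2
  exact ⟨M, h𝒜𝒢 hM, habsorb H (hadm.1 hH) hH𝒜 hMH⟩

end

theorem admissible_cdwIndependent_general [Fintype U] [DecidableEq U]
    (𝒞 𝒦 ℋ : Finset (Finset U))
    (hconn : Connective 𝒞 𝒦) (hadm : Admissible 𝒞 𝒦 ℋ) :
    CDWIndependent ℋ :=
  ⟨hadm.cdIndependent hconn, hadm.weaklyIndependent hconn⟩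

/-- in a connective island domain every admissible family is CDW-independent. -/
theorem admissible_cdwIndependent [Fintype U] [DecidableEq U] [Nonempty U]
    (𝒞 𝒦 ℋ : Finset (Finset U)) (hdom : IslandDomain 𝒞 𝒦)
    (hconn : Connective 𝒞 𝒦) (hadm : Admissible 𝒞 𝒦 ℋ) :
    CDWIndependent ℋ :=
  admissible_cdwIndependent_general 𝒞 𝒦 ℋ hconn hadm
end

section
/- For an island domain (𝒞, 𝒦) the following are equivalent: (i) (𝒞, 𝒦) is a connective island domain; (ii) every system of pre-islands corresponding to (𝒞, 𝒦) is CD-independent; (iii) every system of pre-islands corresponding to (𝒞, 𝒦) is CDW-independent. -/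
open Finset

variable {U : Type*}

/-!
If `(𝒞, 𝒦)` is connective, a pre-island `S` that meets some `T ∈ 𝒞` without containing it
escapes into `T`: some `K ∈ 𝒦` with `S ⊊ K ⊆ S ∪ T` contains a cover of `S`, and the point of
that cover below `min h(S)` must lie in `T`. Two overlapping incomparable pre-islands would then
each contain a point below the other, and a pre-island `H` inside a union of pre-islands, none of
which contains `H`, would contain a point below the minimum of the one containing `min h(H)`.

Conversely, if `A, B ∈ 𝒞` overlap, `B ⊄ A`, and no `K ∈ 𝒦` satisfies `A ⊊ K ⊆ A ∪ B`, the
height `1` on `B`, `0` on `A \ B` and `-1` elsewhere makes both `A` and `B` pre-islands, although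
they are neither comparable nor disjoint.
-/

lemma exists_covers_subset {𝒦 : Finset (Finset U)} {S K : Finset U} (hK : K ∈ 𝒦)
    (hSK : S ⊂ K) : ∃ K' ∈ 𝒦, Covers 𝒦 S K' ∧ K' ⊆ K := by
  obtain ⟨K', ⟨hK', hSK', hK'K⟩, hmin⟩ :=
    exists_minimal_of_wellFoundedLT (fun K' => K' ∈ 𝒦 ∧ S ⊂ K' ∧ K' ⊆ K) ⟨K, hK, hSK, subset_rfl⟩
  refine ⟨K', hK', ⟨hSK', fun L hL hSL hLK' => ?_⟩, hK'K⟩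
  exact hLK'.not_subset (hmin ⟨hL, hSL, hLK'.subset.trans hK'K⟩ hLK'.subset)

lemma isSystemOfPreIslands_filter (𝒞 𝒦 : Finset (Finset U)) (h : U → ℝ)
    [DecidablePred (IsPreIsland 𝒞 𝒦 h)] :
    IsSystemOfPreIslands 𝒞 𝒦 (𝒞.filter (IsPreIsland 𝒞 𝒦 h)) :=
  ⟨h, fun _ => ⟨fun hS => (mem_filter.1 hS).2, fun hS => mem_filter.2 ⟨hS.1, hS⟩⟩⟩

section

variable [DecidableEq U] {𝒞 𝒦 : Finset (Finset U)} {h : U → ℝ}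

lemma IsPreIsland.exists_lt_of_connective (hconn : Connective 𝒞 𝒦) {S T : Finset U}
    (hS : IsPreIsland 𝒞 𝒦 h S) (hT : T ∈ 𝒞) (hST : (S ∩ T).Nonempty) (hTS : ¬T ⊆ S) :
    ∃ k ∈ T, ∀ s ∈ S, h k < h s := by
  obtain ⟨K, hK, hSK, hKST⟩ := hconn S hS.1 T hT hST hTS
  obtain ⟨K', hK', hcov, hK'K⟩ := exists_covers_subset hK hSK
  obtain ⟨k, hkK', hk⟩ := hS.2.2 K' hK' hcov
  have hkS : k ∉ S := fun hkS => (hk k hkS).false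
  exact ⟨k, (mem_union.1 (hKST (hK'K hkK'))).resolve_left hkS, hk⟩

lemma Connective.cdIndependent (hconn : Connective 𝒞 𝒦) {𝒮 : Finset (Finset U)}
    (h𝒮 : ∀ S ∈ 𝒮, IsPreIsland 𝒞 𝒦 h S) : CDIndependent 𝒮 := by
  intro A hA B hB
  by_contra! ⟨hAB, hBA, hdisj⟩
  have hA' := h𝒮 A hA
  have hB' := h𝒮 B hB
  obtain ⟨b, hb, hbA⟩ := hA'.exists_lt_of_connective hconn hB'.1 hdisj hBA
  obtain ⟨a, ha, haB⟩ :=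
    hB'.exists_lt_of_connective hconn hA'.1 (inter_comm A B ▸ hdisj) hAB
  exact (hbA a ha).asymm (haB b hb)

lemma Connective.weaklyIndependent (hconn : Connective 𝒞 𝒦) {𝒮 : Finset (Finset U)}
    (h𝒮 : ∀ S ∈ 𝒮, IsPreIsland 𝒞 𝒦 h S) : WeaklyIndependent 𝒮 := by
  intro H hH 𝒢 h𝒢 _ hH𝒢
  by_contra! hnot
  have hH' := h𝒮 H hH
  obtain ⟨m, hmH, hm⟩ := H.exists_min_image h hH'.2.1
  obtain ⟨G, hG, hmG⟩ := mem_sup.1 (hH𝒢 hmH)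
  obtain ⟨k, hkH, hk⟩ := (h𝒮 G (h𝒢 hG)).exists_lt_of_connective hconn hH'.1
    ⟨m, mem_inter.2 ⟨hmG, hmH⟩⟩ (hnot G hG)
  exact (hk m hmG).not_ge (hm k hkH)

lemma Connective.cdwIndependent (hconn : Connective 𝒞 𝒦) {𝒮 : Finset (Finset U)}
    (h𝒮 : IsSystemOfPreIslands 𝒞 𝒦 𝒮) : CDWIndependent 𝒮 := by
  obtain ⟨h, h𝒮⟩ := h𝒮
  have hpre : ∀ S ∈ 𝒮, IsPreIsland 𝒞 𝒦 h S := fun S hS => (h𝒮 S).1 hS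
  exact ⟨hconn.cdIndependent hpre, hconn.weaklyIndependent hpre⟩

def stepHeight (A B : Finset U) (u : U) : ℝ :=
  if u ∈ B then 1 else if u ∈ A then 0 else -1

lemma isPreIsland_stepHeight_right {A B : Finset U} (hB : B ∈ 𝒞) (hBne : B.Nonempty) :
    IsPreIsland 𝒞 𝒦 (stepHeight A B) B := by
  refine ⟨hB, hBne, fun K _ hcov => ?_⟩
  obtain ⟨k, hkK, hkB⟩ := not_subset.1 hcov.1.not_subset
  refine ⟨k, hkK, fun s hs => ?_⟩
  simp only [stepHeight, if_pos hs, if_neg hkB]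
  split_ifs <;> norm_num

lemma isPreIsland_stepHeight_left {A B : Finset U} (hA : A ∈ 𝒞) (hAne : A.Nonempty)
    (hgap : ∀ K ∈ 𝒦, A ⊂ K → ¬K ⊆ A ∪ B) : IsPreIsland 𝒞 𝒦 (stepHeight A B) A := by
  refine ⟨hA, hAne, fun K hK hcov => ?_⟩
  obtain ⟨k, hkK, hkAB⟩ := not_subset.1 (hgap K hK hcov.1)
  obtain ⟨hkA, hkB⟩ := not_or.1 (mt mem_union.2 hkAB)
  refine ⟨k, hkK, fun s hs => ?_⟩
  simp only [stepHeight, if_neg hkA, if_neg hkB, if_pos hs]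
  split_ifs <;> norm_num

lemma connective_of_forall_cdIndependent (h𝒞𝒦 : 𝒞 ⊆ 𝒦)
    (hcd : ∀ 𝒮 : Finset (Finset U), IsSystemOfPreIslands 𝒞 𝒦 𝒮 → CDIndependent 𝒮) :
    Connective 𝒞 𝒦 := by
  classical
  intro A hA B hB hAB hBA
  by_contra! hgap
  have hAB' : ¬A ⊆ B := fun hsub =>
    hgap B (h𝒞𝒦 hB) (ssubset_of_subset_not_subset hsub hBA) subset_union_right
  have hApre := isPreIsland_stepHeight_left hA (hAB.mono inter_subset_left) hgap
  have hBpre := isPreIsland_stepHeight_right (A := A) (𝒦 := 𝒦) hB (hAB.mono inter_subset_right)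
  rcases hcd _ (isSystemOfPreIslands_filter 𝒞 𝒦 (stepHeight A B)) A (mem_filter.2 ⟨hA, hApre⟩)
    B (mem_filter.2 ⟨hB, hBpre⟩) with hsub | hsub | hdisj
  · exact hAB' hsub
  · exact hBA hsub
  · exact hAB.ne_empty hdisj

end

theorem connective_iff_cd_iff_cdw_general [Fintype U] [DecidableEq U]
    (𝒞 𝒦 : Finset (Finset U)) (hdom : IslandDomain 𝒞 𝒦) :
    (Connective 𝒞 𝒦 ↔
        ∀ 𝒮 : Finset (Finset U), IsSystemOfPreIslands 𝒞 𝒦 𝒮 → CDIndependent 𝒮) ∧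
      (Connective 𝒞 𝒦 ↔
        ∀ 𝒮 : Finset (Finset U), IsSystemOfPreIslands 𝒞 𝒦 𝒮 → CDWIndependent 𝒮) := by
  have hconn := connective_of_forall_cdIndependent hdom.1
  exact ⟨⟨fun hc _ h𝒮 => (hc.cdwIndependent h𝒮).1, hconn⟩,
    ⟨fun hc _ h𝒮 => hc.cdwIndependent h𝒮, fun hcdw => hconn fun 𝒮 h𝒮 => (hcdw 𝒮 h𝒮).1⟩⟩

/-- connective ↔ all systems of pre-islands CD-independent
↔ all systems of pre-islands CDW-independent. -/
theorem connective_iff_cd_iff_cdw [Fintype U] [DecidableEq U] [Nonempty U]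
    (𝒞 𝒦 : Finset (Finset U)) (hdom : IslandDomain 𝒞 𝒦) :
    (Connective 𝒞 𝒦 ↔
        ∀ 𝒮 : Finset (Finset U), IsSystemOfPreIslands 𝒞 𝒦 𝒮 → CDIndependent 𝒮) ∧
      (Connective 𝒞 𝒦 ↔
        ∀ 𝒮 : Finset (Finset U), IsSystemOfPreIslands 𝒞 𝒦 𝒮 → CDWIndependent 𝒮) :=
  connective_iff_cd_iff_cdw_general 𝒞 𝒦 hdom
end

section
/- If (𝒞, 𝒦) is a connective island domain, then a subfamily of 𝒞 is a system of pre-islands corresponding to (𝒞, 𝒦) if and only if it is admissible. -/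
open Finset

variable {U : Type*}

/-- Every member of a finite family lies below a maximal member. -/
lemma exists_maximal_above [DecidableEq U] (ℋ : Finset (Finset U)) (G : Finset U)
    (hG : G ∈ ℋ) : ∃ A ∈ ℋ, G ⊆ A ∧ ∀ B ∈ ℋ, A ⊆ B → A = B := by
  obtain ⟨A, hA, hmax⟩ := Finset.exists_max_image (ℋ.filter (fun B => G ⊆ B))
    Finset.card ⟨G, Finset.mem_filter.mpr ⟨hG, Finset.Subset.refl G⟩⟩
  obtain ⟨hAℋ, hGA⟩ := Finset.mem_filter.mp hA
  refine ⟨A, hAℋ, hGA, fun B hB hAB => ?_⟩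
  exact (Finset.eq_of_subset_of_card_le hAB
    (hmax B (Finset.mem_filter.mpr ⟨hB, hGA.trans hAB⟩))).symm ▸ rfl

/-- Peeling lemma: from the antichain property we extract a rank function. -/
lemma peel_rank [DecidableEq U] (𝒦 : Finset (Finset U)) :
    ∀ (n : ℕ) (ℋ : Finset (Finset U)), ℋ.card = n →
    (∀ 𝒜 ⊆ ℋ, 𝒜.Nonempty → (∀ A ∈ 𝒜, ∀ B ∈ 𝒜, A ⊆ B → A = B) →
      ∃ H ∈ 𝒜, ∀ K ∈ 𝒦, H ⊂ K → ¬K ⊆ 𝒜.sup id) →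
    ∃ r : Finset U → ℕ, ∀ H ∈ ℋ, ∀ K ∈ 𝒦, H ⊂ K →
      ∃ k ∈ K, ∀ G ∈ ℋ, r H ≤ r G → k ∉ G := by
  intro n
  induction n with
  | zero =>
    intro ℋ hcard _
    refine ⟨fun _ => 0, ?_⟩
    simp [Finset.card_eq_zero.mp hcard]
  | succ m ih =>
    intro ℋ hcard hadm
    have hne : ℋ.Nonempty := Finset.card_pos.mp (by omega)
    obtain ⟨G0, hG0⟩ := hne
    obtain ⟨A0, hA0, _, hA0max⟩ := exists_maximal_above ℋ G0 hG0
    set 𝒜 := ℋ.filter (fun A => ∀ B ∈ ℋ, A ⊆ B → A = B) with h𝒜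
    have h𝒜ne : 𝒜.Nonempty := ⟨A0, Finset.mem_filter.mpr ⟨hA0, hA0max⟩⟩
    have h𝒜sub : 𝒜 ⊆ ℋ := Finset.filter_subset _ _
    have hanti : ∀ A ∈ 𝒜, ∀ B ∈ 𝒜, A ⊆ B → A = B := fun A hA B hB hAB =>
      (Finset.mem_filter.mp hA).2 B (h𝒜sub hB) hAB
    obtain ⟨H, hH𝒜, hHw⟩ := hadm 𝒜 h𝒜sub h𝒜ne hanti
    have hHℋ : H ∈ ℋ := h𝒜sub hH𝒜
    have hcard' : (ℋ.erase H).card = m := by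
      rw [Finset.card_erase_of_mem hHℋ, hcard]; omega
    have hadm' : ∀ 𝒜' ⊆ ℋ.erase H, 𝒜'.Nonempty →
        (∀ A ∈ 𝒜', ∀ B ∈ 𝒜', A ⊆ B → A = B) →
        ∃ H' ∈ 𝒜', ∀ K ∈ 𝒦, H' ⊂ K → ¬K ⊆ 𝒜'.sup id :=
      fun 𝒜' h𝒜' => hadm 𝒜' (h𝒜'.trans (Finset.erase_subset _ _))
    obtain ⟨r', hr'⟩ := ih (ℋ.erase H) hcard' hadm'
    refine ⟨fun G => if G = H then 0 else r' G + 1, ?_⟩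
    intro H1 hH1 K hK hsub
    by_cases hH1H : H1 = H
    · subst hH1H
      obtain ⟨k, hkK, hk⟩ := Finset.not_subset.mp (hHw K hK hsub)
      refine ⟨k, hkK, fun G hG _ hkG => ?_⟩
      obtain ⟨A, hA, hGA, hAmax⟩ := exists_maximal_above ℋ G hG
      exact hk (Finset.mem_sup.mpr ⟨A, Finset.mem_filter.mpr ⟨hA, hAmax⟩, hGA hkG⟩)
    · obtain ⟨k, hkK, hk⟩ := hr' H1 (Finset.mem_erase.mpr ⟨hH1H, hH1⟩) K hK hsub
      refine ⟨k, hkK, fun G hG hle => ?_⟩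
      by_cases hGH : G = H
      · exfalso; simp [hGH, hH1H] at hle
      · exact hk G (Finset.mem_erase.mpr ⟨hGH, hG⟩) (by simpa [hH1H, hGH] using hle)

/-- in a connective island domain, systems of pre-islands = admissible families. -/
theorem system_iff_admissible [Fintype U] [DecidableEq U] [Nonempty U]
    (𝒞 𝒦 ℋ : Finset (Finset U)) (hdom : IslandDomain 𝒞 𝒦)
    (hconn : Connective 𝒞 𝒦) :
    IsSystemOfPreIslands 𝒞 𝒦 ℋ ↔ Admissible 𝒞 𝒦 ℋ := by
  constructor
  · -- forward: a system of pre-islands is admissible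
    rintro ⟨h, hsys⟩
    refine ⟨fun S hS => ((hsys S).mp hS).1, ?_, ?_, ?_⟩
    · intro hemp
      exact absurd ((hsys ∅).mp hemp).2.1 (by simp)
    · exact (hsys _).mpr ⟨hdom.2, Finset.univ_nonempty, fun K _ hcov =>
        absurd hcov.1 (by simp [Finset.ssubset_def, Finset.subset_univ])⟩
    · intro 𝒜 h𝒜 h𝒜ne hanti
      -- pick u0 minimizing h on ⋃𝒜, and H ∈ 𝒜 containing u0
      obtain ⟨A1, hA1⟩ := h𝒜ne
      obtain ⟨a1, ha1⟩ := ((hsys A1).mp (h𝒜 hA1)).2.1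
      have hsupne : (𝒜.sup id).Nonempty := ⟨a1, Finset.mem_sup.mpr ⟨A1, hA1, ha1⟩⟩
      obtain ⟨u0, hu0mem, hu0min⟩ := Finset.exists_min_image (𝒜.sup id) h hsupne
      obtain ⟨H, hH𝒜, hu0H⟩ := Finset.mem_sup.mp hu0mem
      refine ⟨H, hH𝒜, fun K hK hHK hKsub => ?_⟩
      -- shrink K to a cover of H
      have h𝒯ne : (𝒦.filter (fun K' => H ⊂ K' ∧ K' ⊆ K)).Nonempty :=
        ⟨K, Finset.mem_filter.mpr ⟨hK, hHK, Finset.Subset.refl K⟩⟩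
      obtain ⟨K', hK'mem, hK'min⟩ :=
        Finset.exists_min_image _ Finset.card h𝒯ne
      obtain ⟨hK'𝒦, hHK', hK'K⟩ := Finset.mem_filter.mp hK'mem
      have hcov : Covers 𝒦 H K' := by
        refine ⟨hHK', fun K'' hK'' hHK'' hK''K' => ?_⟩
        have : K'' ∈ 𝒦.filter (fun K' => H ⊂ K' ∧ K' ⊆ K) :=
          Finset.mem_filter.mpr ⟨hK'', hHK'', hK''K'.subset.trans hK'K⟩
        exact absurd (hK'min K'' this) (not_le.mpr (Finset.card_lt_card hK''K'))
      obtain ⟨k, hkK', hk⟩ := ((hsys H).mp (h𝒜 hH𝒜)).2.2 K' hK'𝒦 hcov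
      have hkmem : k ∈ 𝒜.sup id := hKsub (hK'K hkK')
      exact absurd (hk u0 hu0H) (not_lt.mpr (hu0min k hkmem))
  · -- backward: an admissible family is a system of pre-islands
    rintro ⟨hHC, hemp, huniv, hadm⟩
    obtain ⟨r, hr⟩ := peel_rank 𝒦 ℋ.card ℋ rfl hadm
    have hfne : ∀ u : U, (((ℋ.filter (fun G => u ∈ G)).image r)).Nonempty :=
      fun u => ⟨r Finset.univ, Finset.mem_image.mpr
        ⟨Finset.univ, Finset.mem_filter.mpr ⟨huniv, Finset.mem_univ u⟩, rfl⟩⟩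
    set hnat : U → ℕ := fun u => (((ℋ.filter (fun G => u ∈ G)).image r)).max' (hfne u)
      with hhnat
    have hmono : ∀ (u : U) (G : Finset U), G ∈ ℋ → u ∈ G → r G ≤ hnat u :=
      fun u G hG hu => Finset.le_max' _ _
        (Finset.mem_image.mpr ⟨G, Finset.mem_filter.mpr ⟨hG, hu⟩, rfl⟩)
    have hattain : ∀ u : U, ∃ G ∈ ℋ, u ∈ G ∧ hnat u = r G := by
      intro u
      have := Finset.max'_mem _ (hfne u)
      obtain ⟨G, hG, hGr⟩ := Finset.mem_image.mp this
      exact ⟨G, (Finset.mem_filter.mp hG).1, (Finset.mem_filter.mp hG).2, hGr.symm⟩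
    refine ⟨fun u => (hnat u : ℝ), fun S => ⟨?_, ?_⟩⟩
    · -- every member of ℋ is a pre-island
      intro hS
      refine ⟨hHC hS, Finset.nonempty_iff_ne_empty.mpr (fun hSe => hemp (hSe ▸ hS)),
        fun K hK hcov => ?_⟩
      obtain ⟨k, hkK, hk⟩ := hr S hS K hK hcov.1
      refine ⟨k, hkK, fun s hs => ?_⟩
      have h1 : r S ≤ hnat s := hmono s S hS hs
      obtain ⟨G, hG, hkG, hGr⟩ := hattain k
      have h2 : ¬ r S ≤ r G := fun hle => hk G hG hle hkG
      have h3 : hnat k < hnat s := by omega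
      show ((hnat k : ℝ)) < (hnat s : ℝ)
      exact_mod_cast h3
    · -- every pre-island belongs to ℋ
      rintro ⟨hSC, hSne, hpre⟩
      by_contra hSH
      obtain ⟨s0, hs0S, hs0min⟩ := Finset.exists_min_image S hnat hSne
      set t := hnat s0 with ht
      set ℱ := ℋ.filter (fun G => (G ∩ S).Nonempty ∧ t ≤ r G) with hℱ
      have hℱsub : ℱ ⊆ ℋ := Finset.filter_subset _ _
      have hSℱ : ∀ s ∈ S, ∃ G ∈ ℱ, s ∈ G := by
        intro s hs
        obtain ⟨G, hG, hsG, hGr⟩ := hattain s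
        exact ⟨G, Finset.mem_filter.mpr ⟨hG, ⟨s, Finset.mem_inter.mpr ⟨hsG, hs⟩⟩,
          hGr ▸ hs0min s hs⟩, hsG⟩
      have hℱne : ℱ.Nonempty := by
        obtain ⟨G, hG, _⟩ := hSℱ s0 hs0S; exact ⟨G, hG⟩
      by_cases hcase : ∀ G ∈ ℱ, G ⊆ S
      · -- S is the union of an antichain in ℋ : contradiction with admissibility
        set 𝒟 := ℱ.filter (fun D => ∀ G ∈ ℱ, D ⊆ G → D = G) with h𝒟
        have h𝒟sub : 𝒟 ⊆ ℱ := Finset.filter_subset _ _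
        have hup : ∀ G ∈ ℱ, ∃ D ∈ 𝒟, G ⊆ D := by
          intro G hG
          obtain ⟨D, hD, hGD, hDmax⟩ := exists_maximal_above ℱ G hG
          exact ⟨D, Finset.mem_filter.mpr ⟨hD, hDmax⟩, hGD⟩
        have h𝒟ne : 𝒟.Nonempty := by
          obtain ⟨G, hG⟩ := hℱne
          obtain ⟨D, hD, _⟩ := hup G hG
          exact ⟨D, hD⟩
        have hanti : ∀ A ∈ 𝒟, ∀ B ∈ 𝒟, A ⊆ B → A = B := fun A hA B hB hAB =>
          (Finset.mem_filter.mp hA).2 B (h𝒟sub hB) hAB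
        have hsupS : 𝒟.sup id ⊆ S := by
          intro u hu
          obtain ⟨D, hD, huD⟩ := Finset.mem_sup.mp hu
          exact hcase D (h𝒟sub hD) huD
        have hSsup : S ⊆ 𝒟.sup id := by
          intro s hs
          obtain ⟨G, hG, hsG⟩ := hSℱ s hs
          obtain ⟨D, hD, hGD⟩ := hup G hG
          exact Finset.mem_sup.mpr ⟨D, hD, hGD hsG⟩
        obtain ⟨D, hD𝒟, hDw⟩ := hadm 𝒟 (fun x hx => hℱsub (h𝒟sub hx)) h𝒟ne hanti
        have hDS : D ⊆ S := hcase D (h𝒟sub hD𝒟)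
        have hDSne : (D ∩ S).Nonempty := (Finset.mem_filter.mp (h𝒟sub hD𝒟)).2.1
        have hnSD : ¬S ⊆ D := fun hSD =>
          hSH ((Finset.Subset.antisymm hSD hDS) ▸ hℱsub (h𝒟sub hD𝒟))
        obtain ⟨K, hK𝒦, hDK, hKsub⟩ :=
          hconn D (hHC (hℱsub (h𝒟sub hD𝒟))) S hSC hDSne hnSD
        refine hDw K hK𝒦 hDK ?_
        exact (hKsub.trans (Finset.union_subset hDS (Finset.Subset.refl S))).trans hSsup
      · -- some G ∈ ℱ sticks out of S: build a bad cover of S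
        push_neg at hcase
        obtain ⟨G, hGℱ, hGnS⟩ := hcase
        obtain ⟨hGℋ, hGSne, hGr⟩ := Finset.mem_filter.mp hGℱ
        have hSGne : (S ∩ G).Nonempty := by
          rwa [Finset.inter_comm] at hGSne
        obtain ⟨K0, hK0𝒦, hSK0, hK0sub⟩ := hconn S hSC G (hHC hGℋ) hSGne hGnS
        have hhigh : ∀ u ∈ K0, t ≤ hnat u := by
          intro u hu
          rcases Finset.mem_union.mp (hK0sub hu) with h1 | h1
          · exact hs0min u h1
          · exact hGr.trans (hmono u G hGℋ h1)
        set 𝒯 := 𝒦.filter (fun K => S ⊂ K ∧ ∀ u ∈ K, t ≤ hnat u) with h𝒯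
        have h𝒯ne : 𝒯.Nonempty := ⟨K0, Finset.mem_filter.mpr ⟨hK0𝒦, hSK0, hhigh⟩⟩
        obtain ⟨K, hKmem, hKmin⟩ := Finset.exists_min_image 𝒯 Finset.card h𝒯ne
        obtain ⟨hK𝒦, hSK, hKhigh⟩ := Finset.mem_filter.mp hKmem
        have hcov : Covers 𝒦 S K := by
          refine ⟨hSK, fun K'' hK'' hSK'' hK''K => ?_⟩
          have : K'' ∈ 𝒯 := Finset.mem_filter.mpr
            ⟨hK'', hSK'', fun u hu => hKhigh u (hK''K.subset hu)⟩
          exact absurd (hKmin K'' this) (not_le.mpr (Finset.card_lt_card hK''K))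
        obtain ⟨k, hkK, hk⟩ := hpre K hK𝒦 hcov
        have h1 : (hnat k : ℝ) < hnat s0 := hk s0 hs0S
        have h2 : t ≤ hnat k := hKhigh k hkK
        have : hnat k < hnat s0 := by exact_mod_cast h1
        omega
end

section
/- Every maximal CDW-independent subfamily of P(U) has exactly |U| + 1 elements, for a nonempty finite set U. -/
open Finset

variable {U : Type*}

section Aux
variable [DecidableEq U] {ℋ : Finset (Finset U)}

lemma mem_sup_split (𝒢 : Finset (Finset U)) (S : Finset U) {x : U}
    (hx : x ∈ 𝒢.sup id) : x ∈ S ∧ S ∈ 𝒢 ∨ x ∈ (𝒢.erase S).sup id := by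
  obtain ⟨G, hG, hxG⟩ := Finset.mem_sup.mp hx
  by_cases h : G = S
  · exact Or.inl ⟨h ▸ hxG, h ▸ hG⟩
  · exact Or.inr (Finset.mem_sup.mpr ⟨G, Finset.mem_erase.mpr ⟨h, hG⟩, hxG⟩)

lemma aux_empty (hcdw : CDWIndependent ℋ)
    (hmax : ∀ 𝒢 : Finset (Finset U), CDWIndependent 𝒢 → ℋ ⊆ 𝒢 → ℋ = 𝒢) :
    (∅ : Finset U) ∈ ℋ := by
  have h : ℋ = insert ∅ ℋ := by
    apply hmax _ _ (Finset.subset_insert _ _)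
    constructor
    · intro A hA B hB
      rcases Finset.mem_insert.mp hA with rfl | hA
      · exact Or.inl (Finset.empty_subset _)
      rcases Finset.mem_insert.mp hB with rfl | hB
      · exact Or.inr (Or.inl (Finset.empty_subset _))
      exact hcdw.1 A hA B hB
    · intro H hH 𝒢 h𝒢 hne hsub
      rcases Finset.mem_insert.mp hH with rfl | hH
      · obtain ⟨G, hG⟩ := hne; exact ⟨G, hG, Finset.empty_subset _⟩
      by_cases hHe : H = ∅
      · obtain ⟨G, hG⟩ := hne; exact ⟨G, hG, hHe ▸ Finset.empty_subset _⟩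
      have hsub' : H ⊆ (𝒢.erase ∅).sup id := by
        intro x hx
        rcases mem_sup_split 𝒢 ∅ (hsub hx) with ⟨hx0, _⟩ | h
        · exact absurd hx0 (Finset.notMem_empty x)
        · exact h
      have hne' : (𝒢.erase ∅).Nonempty := by
        rcases (𝒢.erase ∅).eq_empty_or_nonempty with he | hne'
        · rw [he] at hsub'; simp at hsub'; exact absurd hsub' hHe
        · exact hne'
      have hs : 𝒢.erase ∅ ⊆ ℋ := by
        intro G hG
        have := h𝒢 (Finset.mem_of_mem_erase hG)
        rcases Finset.mem_insert.mp this with rfl | h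
        · exact absurd rfl (Finset.mem_erase.mp hG).1
        · exact h
      obtain ⟨G, hG, hHG⟩ := hcdw.2 H hH _ hs hne' hsub'
      exact ⟨G, Finset.mem_of_mem_erase hG, hHG⟩
  rw [h]; exact Finset.mem_insert_self _ _

lemma aux_cover_s14 (hcdw : CDWIndependent ℋ)
    (hmax : ∀ 𝒢 : Finset (Finset U), CDWIndependent 𝒢 → ℋ ⊆ 𝒢 → ℋ = 𝒢)
    (u : U) : ∃ H ∈ ℋ, u ∈ H := by
  by_contra hc
  push_neg at hc
  have h : ℋ = insert {u} ℋ := by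
    apply hmax _ _ (Finset.subset_insert _ _)
    constructor
    · intro A hA B hB
      rcases Finset.mem_insert.mp hA with rfl | hA
      · rcases Finset.mem_insert.mp hB with rfl | hB
        · exact Or.inl subset_rfl
        · refine Or.inr (Or.inr ?_)
          rw [Finset.eq_empty_iff_forall_notMem]
          intro x hx
          rw [Finset.mem_inter, Finset.mem_singleton] at hx
          exact hc B hB (hx.1 ▸ hx.2)
      rcases Finset.mem_insert.mp hB with rfl | hB
      · refine Or.inr (Or.inr ?_)
        rw [Finset.eq_empty_iff_forall_notMem]
        intro x hx
        rw [Finset.mem_inter, Finset.mem_singleton] at hx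
        exact hc A hA (hx.2 ▸ hx.1)
      exact hcdw.1 A hA B hB
    · intro H hH 𝒢 h𝒢 hne hsub
      rcases Finset.mem_insert.mp hH with rfl | hH
      · have hu : u ∈ 𝒢.sup id := hsub (Finset.mem_singleton_self u)
        obtain ⟨G, hG, huG⟩ := Finset.mem_sup.mp hu
        rcases Finset.mem_insert.mp (h𝒢 hG) with h | hG'
        · exact ⟨G, hG, h.ge⟩
        · exact absurd huG (hc G hG')
      · have hsub' : H ⊆ (𝒢.erase {u}).sup id := by
          intro x hx
          rcases mem_sup_split 𝒢 {u} (hsub hx) with ⟨hx0, _⟩ | h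
          · rw [Finset.mem_singleton] at hx0
            exact absurd (hx0 ▸ hx) (hc H hH)
          · exact h
        rcases (𝒢.erase {u}).eq_empty_or_nonempty with he | hne'
        · rw [he] at hsub'; simp at hsub'
          obtain ⟨G, hG⟩ := hne
          exact ⟨G, hG, hsub' ▸ Finset.empty_subset _⟩
        have hs : 𝒢.erase {u} ⊆ ℋ := by
          intro G hG
          rcases Finset.mem_insert.mp (h𝒢 (Finset.mem_of_mem_erase hG)) with rfl | h
          · exact absurd rfl (Finset.mem_erase.mp hG).1
          · exact h
        obtain ⟨G, hG, hHG⟩ := hcdw.2 H hH _ hs hne' hsub'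
        exact ⟨G, Finset.mem_of_mem_erase hG, hHG⟩
  have : ({u} : Finset U) ∈ ℋ := by rw [h]; exact Finset.mem_insert_self _ _
  exact hc _ this (Finset.mem_singleton_self u)

lemma aux_min (hcdw : CDWIndependent ℋ)
    (hmax : ∀ 𝒢 : Finset (Finset U), CDWIndependent 𝒢 → ℋ ⊆ 𝒢 → ℋ = 𝒢)
    (u : U) : ∃ M ∈ ℋ, u ∈ M ∧ ∀ H ∈ ℋ, u ∈ H → M ⊆ H := by
  classical
  obtain ⟨H0, hH0, huH0⟩ := aux_cover_s14 hcdw hmax u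
  obtain ⟨M, hM, hMmin⟩ := Finset.exists_min_image (ℋ.filter (u ∈ ·)) Finset.card
    ⟨H0, Finset.mem_filter.mpr ⟨hH0, huH0⟩⟩
  rw [Finset.mem_filter] at hM
  refine ⟨M, hM.1, hM.2, ?_⟩
  intro H hH huH
  rcases hcdw.1 M hM.1 H hH with h | h | h
  · exact h
  · have hle := hMmin H (Finset.mem_filter.mpr ⟨hH, huH⟩)
    exact (Finset.eq_of_subset_of_card_le h hle).ge
  · exfalso
    have : u ∈ M ∩ H := Finset.mem_inter.mpr ⟨hM.2, huH⟩
    rw [h] at this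
    exact Finset.notMem_empty u this

/-- every nonempty member has a private element -/
lemma aux_private (hcdw : CDWIndependent ℋ) {H : Finset U} (hH : H ∈ ℋ)
    (hne : H.Nonempty) : ∃ u ∈ H, ∀ G ∈ ℋ, u ∈ G → H ⊆ G := by
  classical
  by_contra hc
  push_neg at hc
  set 𝒢 := ℋ.filter (· ⊂ H) with h𝒢def
  have hsub : H ⊆ 𝒢.sup id := by
    intro x hx
    obtain ⟨G, hG, hxG, hnsub⟩ := hc x hx
    have hGH : G ⊂ H := by
      rcases hcdw.1 G hG H hH with h | h | h
      · exact lt_of_le_of_ne h (fun he => hnsub (he ▸ subset_rfl))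
      · exact absurd h hnsub
      · exfalso
        have : x ∈ G ∩ H := Finset.mem_inter.mpr ⟨hxG, hx⟩
        rw [h] at this; exact Finset.notMem_empty x this
    exact Finset.mem_sup.mpr ⟨G, Finset.mem_filter.mpr ⟨hG, hGH⟩, hxG⟩
  have hne' : 𝒢.Nonempty := by
    obtain ⟨x, hx⟩ := hne
    obtain ⟨G, hG, hxG⟩ := Finset.mem_sup.mp (hsub hx)
    exact ⟨G, hG⟩
  obtain ⟨G, hG, hHG⟩ := hcdw.2 H hH 𝒢 (Finset.filter_subset _ _) hne' hsub
  exact absurd hHG (Finset.mem_filter.mp hG).2.not_subset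

lemma aux_key (hcdw : CDWIndependent ℋ)
    (hmax : ∀ 𝒢 : Finset (Finset U), CDWIndependent 𝒢 → ℋ ⊆ 𝒢 → ℋ = 𝒢)
    {u v : U} (huv : u ≠ v) {M : Finset U} (hM : M ∈ ℋ)
    (hu : u ∈ M) (hv : v ∈ M)
    (hminu : ∀ H ∈ ℋ, u ∈ H → M ⊆ H)
    (hminv : ∀ H ∈ ℋ, v ∈ H → M ⊆ H) : False := by
  classical
  set C := (ℋ.filter (· ⊂ M)).sup id with hC
  have hCsub : C ⊆ M := by
    intro x hx
    obtain ⟨G, hG, hxG⟩ := Finset.mem_sup.mp hx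
    exact (Finset.mem_filter.mp hG).2.subset hxG
  have hsubC : ∀ G ∈ ℋ, G ⊂ M → G ⊆ C := by
    intro G hG hGM x hx
    exact Finset.mem_sup.mpr ⟨G, Finset.mem_filter.mpr ⟨hG, hGM⟩, hx⟩
  have hvC : v ∉ C := by
    intro hvc
    obtain ⟨G, hG, hvG⟩ := Finset.mem_sup.mp hvc
    rw [Finset.mem_filter] at hG
    exact hG.2.not_subset (hminv G hG.1 hvG)
  set S := insert u C with hS
  have hSM : S ⊆ M := Finset.insert_subset hu hCsub
  have hvS : v ∉ S := by
    simp only [hS, Finset.mem_insert]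
    rintro (rfl | h)
    · exact huv rfl
    · exact hvC h
  have hSneM : S ≠ M := fun h => hvS (h ▸ hv)
  have hcdw' : CDWIndependent (insert S ℋ) := by
    constructor
    · -- CD independence
      have key : ∀ B ∈ ℋ, S ⊆ B ∨ B ⊆ S ∨ S ∩ B = ∅ := by
        intro B hB
        rcases hcdw.1 M hM B hB with h | h | h
        · exact Or.inl (hSM.trans h)
        · by_cases hBM : B = M
          · exact Or.inl (hBM ▸ hSM)
          · exact Or.inr (Or.inl ((hsubC B hB (lt_of_le_of_ne h hBM)).trans
              (Finset.subset_insert u C)))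
        · refine Or.inr (Or.inr ?_)
          rw [← Finset.subset_empty, ← h]
          exact Finset.inter_subset_inter hSM subset_rfl
      intro A hA B hB
      rcases Finset.mem_insert.mp hA with rfl | hA
      · rcases Finset.mem_insert.mp hB with rfl | hB
        · exact Or.inl subset_rfl
        · exact key B hB
      rcases Finset.mem_insert.mp hB with rfl | hB
      · rcases key A hA with h | h | h
        · exact Or.inr (Or.inl h)
        · exact Or.inl h
        · exact Or.inr (Or.inr (by rwa [Finset.inter_comm] at h))
      · exact hcdw.1 A hA B hB
    · -- weak independence
      intro H' hH' 𝒢 h𝒢 hne hsub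
      rcases Finset.mem_insert.mp hH' with rfl | hH'
      · -- H' = S
        by_cases hSG : S ∈ 𝒢
        · exact ⟨S, hSG, subset_rfl⟩
        · have h𝒢ℋ : 𝒢 ⊆ ℋ := fun G hG =>
            (Finset.mem_insert.mp (h𝒢 hG)).resolve_left (fun h => hSG (h ▸ hG))
          have : u ∈ 𝒢.sup id := hsub (Finset.mem_insert_self u C)
          obtain ⟨G, hG, huG⟩ := Finset.mem_sup.mp this
          exact ⟨G, hG, hSM.trans (hminu G (h𝒢ℋ hG) huG)⟩
      by_cases hSG : S ∈ 𝒢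
      swap
      · have h𝒢ℋ : 𝒢 ⊆ ℋ := fun G hG =>
          (Finset.mem_insert.mp (h𝒢 hG)).resolve_left (fun h => hSG (h ▸ hG))
        exact hcdw.2 H' hH' 𝒢 h𝒢ℋ hne hsub
      set 𝒢' := 𝒢.erase S with h𝒢'def
      have h𝒢' : 𝒢' ⊆ ℋ := by
        intro G hG
        rcases Finset.mem_insert.mp (h𝒢 (Finset.mem_of_mem_erase hG)) with h | h
        · exact absurd h (Finset.mem_erase.mp hG).1
        · exact h
      by_cases hHM : H' = M
      · subst hHM
        have : v ∈ 𝒢.sup id := hsub hv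
        obtain ⟨G, hG, hvG⟩ := Finset.mem_sup.mp this
        have hGS : G ≠ S := fun h => hvS (h ▸ hvG)
        have hGℋ : G ∈ ℋ := (Finset.mem_insert.mp (h𝒢 hG)).resolve_left hGS
        exact ⟨G, hG, hminv G hGℋ hvG⟩
      rcases hcdw.1 H' hH' M hM with h | h | h
      · -- H' ⊂ M
        exact ⟨S, hSG, (hsubC H' hH' (lt_of_le_of_ne h hHM)).trans
          (Finset.subset_insert u C)⟩
      · -- M ⊂ H'
        have hsub2 : H' ⊆ (insert M 𝒢').sup id := by
          intro x hx
          rcases mem_sup_split 𝒢 S (hsub hx) with ⟨hxS, _⟩ | hx'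
          · exact Finset.mem_sup.mpr ⟨M, Finset.mem_insert_self _ _, hSM hxS⟩
          · obtain ⟨G, hG, hxG⟩ := Finset.mem_sup.mp hx'
            exact Finset.mem_sup.mpr ⟨G, Finset.mem_insert_of_mem hG, hxG⟩
        have hins : insert M 𝒢' ⊆ ℋ := Finset.insert_subset_iff.mpr ⟨hM, h𝒢'⟩
        obtain ⟨G, hG, hH'G⟩ := hcdw.2 H' hH' _ hins ⟨M, Finset.mem_insert_self _ _⟩ hsub2
        rcases Finset.mem_insert.mp hG with rfl | hG'
        · exact absurd (Finset.Subset.antisymm h hH'G).symm hHM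
        · exact ⟨G, Finset.mem_of_mem_erase hG', hH'G⟩
      · -- H' ∩ M = ∅
        have hsub' : H' ⊆ 𝒢'.sup id := by
          intro x hx
          rcases mem_sup_split 𝒢 S (hsub hx) with ⟨hxS, _⟩ | hx'
          · exfalso
            have : x ∈ H' ∩ M := Finset.mem_inter.mpr ⟨hx, hSM hxS⟩
            rw [h] at this
            exact Finset.notMem_empty x this
          · exact hx'
        rcases 𝒢'.eq_empty_or_nonempty with he | hne'
        · rw [he] at hsub'
          simp only [Finset.sup_empty, Finset.bot_eq_empty, Finset.subset_empty] at hsub'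
          exact ⟨S, hSG, hsub' ▸ Finset.empty_subset _⟩
        · obtain ⟨G, hG, h2⟩ := hcdw.2 H' hH' 𝒢' h𝒢' hne' hsub'
          exact ⟨G, Finset.mem_of_mem_erase hG, h2⟩
  have hSmem : S ∈ ℋ := by
    rw [hmax _ hcdw' (Finset.subset_insert _ _)]
    exact Finset.mem_insert_self _ _
  exact hSneM (Finset.Subset.antisymm hSM (hminu S hSmem (Finset.mem_insert_self u C)))

end Aux

/-- every maximal CDW-independent family in `P(U)` has exactly `|U| + 1` members. -/
theorem maximal_cdw_card [Fintype U] [DecidableEq U] [Nonempty U]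
    (ℋ : Finset (Finset U)) (hcdw : CDWIndependent ℋ)
    (hmax : ∀ 𝒢 : Finset (Finset U), CDWIndependent 𝒢 → ℋ ⊆ 𝒢 → ℋ = 𝒢) :
    ℋ.card = Fintype.card U + 1 := by
  classical
  have h0 : (∅ : Finset U) ∈ ℋ := aux_empty hcdw hmax
  set 𝒩 := ℋ.erase (∅ : Finset U) with h𝒩
  choose m hm1 hm2 hm3 using fun u => aux_min hcdw hmax u
  have hmem𝒩 : ∀ u, m u ∈ 𝒩 := fun u =>
    Finset.mem_erase.mpr ⟨Finset.Nonempty.ne_empty ⟨u, hm2 u⟩, hm1 u⟩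
  have card1 : Fintype.card U ≤ 𝒩.card := by
    rw [← Finset.card_univ]
    apply Finset.card_le_card_of_injOn m (fun u _ => hmem𝒩 u)
    intro x _ y _ heq
    by_contra hxy
    exact aux_key hcdw hmax hxy (hm1 x) (hm2 x) (heq ▸ hm2 y) (hm3 x)
      (fun H hH hvH => heq ▸ hm3 y H hH hvH)
  have haux : ∀ H : Finset U, ∃ w : U, H ∈ 𝒩 → w ∈ H ∧ ∀ G ∈ ℋ, w ∈ G → H ⊆ G := by
    intro H
    by_cases h : H ∈ 𝒩
    · obtain ⟨w, hw, hmin⟩ := aux_private hcdw (Finset.mem_of_mem_erase h)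
        (Finset.nonempty_iff_ne_empty.mpr (Finset.mem_erase.mp h).1)
      exact ⟨w, fun _ => ⟨hw, hmin⟩⟩
    · exact ⟨Classical.arbitrary U, fun h' => absurd h' h⟩
  choose ψ hψ using haux
  have card2 : 𝒩.card ≤ Fintype.card U := by
    rw [← Finset.card_univ]
    apply Finset.card_le_card_of_injOn ψ (fun H _ => Finset.mem_univ _)
    intro H1 hH1 H2 hH2 heq
    have p1 := hψ H1 hH1
    have p2 := hψ H2 hH2
    have h12 : H1 ⊆ H2 := p1.2 H2 (Finset.mem_of_mem_erase hH2) (heq.symm ▸ p2.1)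
    have h21 : H2 ⊆ H1 := p2.2 H1 (Finset.mem_of_mem_erase hH1) (heq ▸ p1.1)
    exact Finset.Subset.antisymm h12 h21
  have hcard𝒩 : 𝒩.card = Fintype.card U := le_antisymm card2 card1
  have he : 𝒩.card = ℋ.card - 1 := Finset.card_erase_of_mem h0
  have hpos : 0 < ℋ.card := Finset.card_pos.mpr ⟨∅, h0⟩
  omega
end

section
/- Suppose (𝒞, 𝒦) satisfies: K₁, K₂ ∈ 𝒦 with K₁ ∩ K₂ ≠ ∅ implies K₁ ∪ K₂ ∈ 𝒦, and for all C ∈ 𝒞, K ∈ 𝒦 with C ≺ K one has |K \ C| = 1. Then (𝒞, 𝒦) is a proximity domain, i.e., it is a connective island domain and the relation δ is symmetric on nonempty members of 𝒞. -/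
open Finset

variable {U : Type*}

lemma delta_symm_aux [Fintype U] [DecidableEq U]
    (𝒞 𝒦 : Finset (Finset U)) (hdom : IslandDomain 𝒞 𝒦)
    (hunion : ∀ K₁ ∈ 𝒦, ∀ K₂ ∈ 𝒦, (K₁ ∩ K₂).Nonempty → K₁ ∪ K₂ ∈ 𝒦)
    (hone : ∀ C ∈ 𝒞, ∀ K ∈ 𝒦, Covers 𝒦 C K → (K \ C).card = 1)
    (A : Finset U) (hA : A ∈ 𝒞) (B : Finset U) (hB : B ∈ 𝒞)
    (hAne : A.Nonempty) (hd : Delta 𝒦 A B) : Delta 𝒦 B A := by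
  obtain ⟨K, hK𝒦, hcov, hKB⟩ := hd
  by_cases hBA : (B ∩ A).Nonempty
  · exact ⟨B, hdom.1 hB, Or.inl rfl, hBA⟩
  have hdisj : B ∩ A = ∅ := Finset.not_nonempty_iff_eq_empty.mp hBA
  rcases hcov with rfl | hcov
  · exact absurd (by rwa [Finset.inter_comm] at hKB) hBA
  · have hcard := hone A hA K hK𝒦 hcov
    obtain ⟨x, hx⟩ := Finset.card_eq_one.mp hcard
    have hKsubBA : K \ B ⊆ A := by
      intro y hy
      rw [Finset.mem_sdiff] at hy
      by_contra hyA
      have : y ∈ K \ A := Finset.mem_sdiff.mpr ⟨hy.1, hyA⟩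
      rw [hx, Finset.mem_singleton] at this
      subst this
      -- y = x; show x ∈ B to get contradiction
      obtain ⟨z, hz⟩ := hKB
      rw [Finset.mem_inter] at hz
      have hzA : z ∉ A := fun h => by
        have : z ∈ B ∩ A := Finset.mem_inter.mpr ⟨hz.2, h⟩
        simp [hdisj] at this
      have : z ∈ K \ A := Finset.mem_sdiff.mpr ⟨hz.1, hzA⟩
      rw [hx, Finset.mem_singleton] at this
      subst this
      exact hy.2 hz.2
    have hBK : (B ∩ K).Nonempty := by
      obtain ⟨z, hz⟩ := hKB
      rw [Finset.mem_inter] at hz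
      exact ⟨z, Finset.mem_inter.mpr ⟨hz.2, hz.1⟩⟩
    have hu : B ∪ K ∈ 𝒦 := hunion B (hdom.1 hB) K hK𝒦 hBK
    have hBssub : B ⊂ B ∪ K := by
      obtain ⟨a, ha⟩ := hAne
      refine ⟨Finset.subset_union_left, fun hsub => ?_⟩
      have haK : a ∈ K := hcov.1.1 ha
      have : a ∈ B := hsub (Finset.mem_union_right _ haK)
      have : a ∈ B ∩ A := Finset.mem_inter.mpr ⟨this, ha⟩
      simp [hdisj] at this
    set S := 𝒦.filter (fun L => B ⊂ L ∧ L ⊆ B ∪ K) with hS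
    have hSne : S.Nonempty := ⟨B ∪ K, by simp [hS, hu, hBssub]⟩
    obtain ⟨K', hK'S, hmin⟩ := S.exists_min_image (fun L => L.card) hSne
    simp only [hS, Finset.mem_filter] at hK'S
    obtain ⟨hK'𝒦, hBK', hK'sub⟩ := hK'S
    have hcov' : Covers 𝒦 B K' := by
      refine ⟨hBK', fun K'' hK''𝒦 hBK'' hK''K' => ?_⟩
      have hmem : K'' ∈ S := by
        simp only [hS, Finset.mem_filter]
        exact ⟨hK''𝒦, hBK'', hK''K'.1.trans hK'sub⟩
      have := hmin K'' hmem
      exact absurd (Finset.card_lt_card hK''K') (by omega)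
    obtain ⟨y, hyK', hyB⟩ := Finset.exists_of_ssubset hBK'
    have hyK : y ∈ K := by
      rcases Finset.mem_union.mp (hK'sub hyK') with h | h
      · exact absurd h hyB
      · exact h
    have hyA : y ∈ A := hKsubBA (Finset.mem_sdiff.mpr ⟨hyK, hyB⟩)
    exact ⟨K', hK'𝒦, Or.inr hcov', ⟨y, Finset.mem_inter.mpr ⟨hyK', hyA⟩⟩⟩

/-- union-closedness of `𝒦` on overlapping members plus one-point covers
imply that `(𝒞, 𝒦)` is a proximity domain. -/
theorem union_closed_onePointCovers_proximity [Fintype U] [DecidableEq U] [Nonempty U]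
    (𝒞 𝒦 : Finset (Finset U)) (hdom : IslandDomain 𝒞 𝒦)
    (hunion : ∀ K₁ ∈ 𝒦, ∀ K₂ ∈ 𝒦, (K₁ ∩ K₂).Nonempty → K₁ ∪ K₂ ∈ 𝒦)
    (hone : ∀ C ∈ 𝒞, ∀ K ∈ 𝒦, Covers 𝒦 C K → (K \ C).card = 1) :
    Connective 𝒞 𝒦 ∧
      ∀ A ∈ 𝒞, ∀ B ∈ 𝒞, A.Nonempty → B.Nonempty → (Delta 𝒦 A B ↔ Delta 𝒦 B A) := by
  constructor
  · intro A hA B hB hint hnsub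
    have hu : A ∪ B ∈ 𝒦 := hunion A (hdom.1 hA) B (hdom.1 hB) hint
    refine ⟨A ∪ B, hu, ⟨Finset.subset_union_left, fun hsub => ?_⟩, subset_rfl⟩
    exact hnsub (Finset.union_subset_iff.mp hsub).2
  · intro A hA B hB hAne hBne
    exact ⟨delta_symm_aux 𝒞 𝒦 hdom hunion hone A hA B hB hAne,
           delta_symm_aux 𝒞 𝒦 hdom hunion hone B hB A hA hBne⟩
end
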